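/- arXiv:2502.10661 — 7 statements merged into one kernel-verified Lean document; each statement's English description precedes it below -/
import Mathlib

section
/- For every integer n ≥ 1, the number of flattened Catalan words of length n is (3^(n-1) + 1)/2, i.e., 2·|𝓕_n| = 3^(n-1) + 1. -/
open scoped BigOperators

/-- `w` is a Catalan word: it is nonempty, starts with `1`, and each subsequent
letter lies between `1` and the previous letter plus one. -/
def IsCatalan (w : List ℕ) : Prop :=
  w ≠ [] ∧ w.getD 0 0 = 1 ∧
    ∀ i, i + 1 < w.length →
      1 ≤ w.getD (i + 1) 0 ∧ w.getD (i + 1) 0 ≤ w.getD i 0 + 1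

/-- `i` is the starting index of a maximal weakly increasing run of `w`. -/
def RunStart (w : List ℕ) (i : ℕ) : Prop :=
  i < w.length ∧ (i = 0 ∨ w.getD i 0 < w.getD (i - 1) 0)

/-- `w` is flattened: the first letters of its increasing runs, read left to
right, form a weakly nondecreasing sequence. -/
def IsFlattened (w : List ℕ) : Prop :=
  ∀ i j, RunStart w i → RunStart w j → i ≤ j → w.getD i 0 ≤ w.getD j 0

/-- The set of flattened Catalan words of length `n`. -/
def FlatCat (n : ℕ) : Set (List ℕ) :=
  {w | w.length = n ∧ IsCatalan w ∧ IsFlattened w}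

/-- `i` is the starting index of an occurrence of the consecutive pattern `τ`
in the word `w`, i.e. the factor of `w` of length `|τ|` starting at `i` is
order-isomorphic to `τ`. -/
def OccAt (τ w : List ℕ) (i : ℕ) : Prop :=
  i + τ.length ≤ w.length ∧
    ∀ s < τ.length, ∀ t < τ.length,
      (w.getD (i + s) 0 < w.getD (i + t) 0 ↔ τ.getD s 0 < τ.getD t 0)

/-- The number of occurrences of the consecutive pattern `τ` in `w`. -/
noncomputable def numOcc (τ w : List ℕ) : ℕ :=
  Set.ncard {i | OccAt τ w i}

/-- The number of distinct letters in the terminal (rightmost) increasing run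
of `w`, i.e. in the longest weakly increasing suffix of `w`. -/
noncomputable def trun (w : List ℕ) : ℕ :=
  ((w.drop (sInf {i | List.Chain' (· ≤ ·) (w.drop i)})).toFinset).card

/-- The total number of occurrences of the consecutive pattern `τ` over all
flattened Catalan words of length `n`. -/
noncomputable def tot (n : ℕ) (τ : List ℕ) : ℕ :=
  ∑ᶠ w ∈ FlatCat n, numOcc τ w

/-! ### Auxiliary definitions -/

/-- Last letter of `w`. -/
def gl (w : List ℕ) : ℕ := w.getD (w.length - 1) 0

/-- Length of the maximal weakly decreasing prefix of a list. -/
def trl : List ℕ → ℕ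
  | [] => 0
  | [_] => 1
  | x :: y :: t => if y ≤ x then trl (y :: t) + 1 else 1

/-- Index of the last run start of `w`. -/
def sidx (w : List ℕ) : ℕ := w.length - trl w.reverse

/-- Value at the last run start of `w`. -/
def sval (w : List ℕ) : ℕ := w.getD (sidx w) 0

lemma getD_snoc (w : List ℕ) (x : ℕ) (i : ℕ) :
    (w ++ [x]).getD i 0 = if i = w.length then x else w.getD i 0 := by
  rcases lt_trichotomy i w.length with h | h | h
  · rw [if_neg h.ne, List.getD_append _ _ _ _ h]
  · rw [if_pos h, h, List.getD_append_right _ _ _ _ le_rfl]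
    simp
  · rw [if_neg h.ne', List.getD_eq_default, List.getD_eq_default]
    · omega
    · simp; omega

lemma gl_snoc (w : List ℕ) (x : ℕ) : gl (w ++ [x]) = x := by
  simp [gl, getD_snoc]

lemma trl_pos (w : List ℕ) (hw : w ≠ []) : 1 ≤ trl w := by
  match w with
  | [a] => simp [trl]
  | x :: y :: t => rw [trl]; split <;> omega

lemma trl_le (w : List ℕ) : trl w ≤ w.length := by
  match w with
  | [] => simp [trl]
  | [a] => simp [trl]
  | x :: y :: t =>
    have := trl_le (y :: t)
    rw [trl]; split <;> simp_all <;> omega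

lemma sidx_lt (w : List ℕ) (hw : w ≠ []) : sidx w < w.length := by
  have h1 := trl_pos w.reverse (by simpa using hw)
  have : 0 < w.length := List.length_pos_iff.2 hw
  unfold sidx; omega

lemma sidx_snoc (w : List ℕ) (hw : w ≠ []) (x : ℕ) :
    sidx (w ++ [x]) = if gl w ≤ x then sidx w else w.length := by
  obtain ⟨u, a, rfl⟩ := (List.eq_nil_or_concat' w).resolve_left hw
  have hgl : gl (u ++ [a]) = a := gl_snoc u a
  have hrev : (u ++ [a] ++ [x]).reverse = x :: a :: u.reverse := by simp
  have hrev2 : (u ++ [a]).reverse = a :: u.reverse := by simp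
  rw [sidx, hrev, trl, hgl]
  have hle := trl_le (a :: u.reverse)
  simp only [List.length_append, List.length_cons, List.length_reverse] at hle ⊢
  split
  · rw [sidx, hrev2]
    simp only [List.length_append, List.length_cons, List.length_nil]
    omega
  · simp only [List.length_append, List.length_cons, List.length_nil]
    omega

lemma sval_snoc (w : List ℕ) (hw : w ≠ []) (x : ℕ) :
    sval (w ++ [x]) = if gl w ≤ x then sval w else x := by
  rw [sval, sidx_snoc w hw x]
  split
  · rw [getD_snoc, if_neg (sidx_lt w hw).ne, sval]
  · rw [getD_snoc, if_pos rfl]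

lemma runStart_snoc_lt (w : List ℕ) (x : ℕ) (i : ℕ) (hi : i < w.length) :
    RunStart (w ++ [x]) i ↔ RunStart w i := by
  unfold RunStart
  rw [getD_snoc, getD_snoc, if_neg hi.ne, if_neg (by omega)]
  simp only [List.length_append, List.length_cons, List.length_nil]
  omega

lemma runStart_snoc_last (w : List ℕ) (hw : w ≠ []) (x : ℕ) :
    RunStart (w ++ [x]) w.length ↔ x < gl w := by
  have h0 : 0 < w.length := List.length_pos_iff.2 hw
  unfold RunStart gl
  rw [getD_snoc, getD_snoc, if_pos rfl, if_neg (by omega)]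
  simp only [List.length_append, List.length_cons, List.length_nil]
  constructor
  · rintro ⟨-, h | h⟩
    · omega
    · exact h
  · intro h; exact ⟨by omega, Or.inr h⟩

lemma runStart_zero (w : List ℕ) (hw : w ≠ []) : RunStart w 0 :=
  ⟨List.length_pos_iff.2 hw, Or.inl rfl⟩

/-- No run start strictly after `sidx`: the tail is weakly increasing. -/
lemma chain_after_sidx (w : List ℕ) (hw : w ≠ []) :
    (∀ i, sidx w ≤ i → i + 1 < w.length → w.getD i 0 ≤ w.getD (i + 1) 0) ∧
      RunStart w (sidx w) := by
  induction w using List.reverseRecOn with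
  | nil => exact absurd rfl hw
  | append_singleton u x ih =>
    rcases eq_or_ne u [] with rfl | hu
    · constructor
      · intro i _ h; simp at h
      · simp only [List.nil_append]
        have : sidx [x] = 0 := by simp [sidx, trl]
        rw [this]; exact runStart_zero _ (by simp)
    · obtain ⟨ih1, ih2⟩ := ih hu
      have hsnoc := sidx_snoc u hu x
      by_cases hle : gl u ≤ x
      · rw [if_pos hle] at hsnoc
        constructor
        · intro i hi hi1
          simp only [List.length_append, List.length_cons, List.length_nil] at hi1
          rw [getD_snoc, getD_snoc, hsnoc] at *
          rcases lt_or_eq_of_le (by omega : i + 1 ≤ u.length) with h | h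
          · rw [if_neg (by omega), if_neg (by omega)]
            exact ih1 i (by omega) h
          · rw [if_pos h, if_neg (by omega)]
            have : i = u.length - 1 := by omega
            subst this
            exact hle
        · rw [hsnoc, runStart_snoc_lt u x _ (sidx_lt u hu)]
          exact ih2
      · rw [if_neg hle] at hsnoc
        constructor
        · intro i hi hi1
          rw [hsnoc] at hi
          simp only [List.length_append, List.length_cons, List.length_nil] at hi1
          omega
        · rw [hsnoc, runStart_snoc_last u hu x]
          omega

lemma runStart_le_sidx (w : List ℕ) (hw : w ≠ []) (i : ℕ) (h : RunStart w i) :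
    i ≤ sidx w := by
  by_contra hc
  push_neg at hc
  obtain ⟨h1, -⟩ := chain_after_sidx w hw
  obtain ⟨hi, h0 | hd⟩ := h
  · omega
  · have h2 := h1 (i - 1) (by omega) (by omega)
    have he : i - 1 + 1 = i := by omega
    rw [he] at h2
    omega

lemma sval_le_getD (w : List ℕ) (hw : w ≠ []) (j : ℕ) (h1 : sidx w ≤ j)
    (h2 : j < w.length) : sval w ≤ w.getD j 0 := by
  induction j with
  | zero =>
    have : sidx w = 0 := by omega
    rw [sval, this]
  | succ j ih =>
    rcases eq_or_lt_of_le h1 with h | h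
    · rw [sval, h]
    · have := (chain_after_sidx w hw).1 j (by omega) h2
      have := ih (by omega) (by omega)
      omega

lemma sval_le_gl (w : List ℕ) (hw : w ≠ []) : sval w ≤ gl w := by
  have h0 : 0 < w.length := List.length_pos_iff.2 hw
  have := sidx_lt w hw
  exact sval_le_getD w hw (w.length - 1) (by omega) (by omega)

lemma one_le_sval (w : List ℕ) (hw : IsCatalan w) (hf : IsFlattened w) :
    1 ≤ sval w := by
  have hne := hw.1
  have := hf 0 (sidx w) (runStart_zero w hne) (chain_after_sidx w hne).2 (by omega)
  rw [hw.2.1] at this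
  exact this

lemma cond_iff (w : List ℕ) (hw : w ≠ []) (hf : IsFlattened w) (x : ℕ) :
    (∀ i, RunStart w i → w.getD i 0 ≤ x) ↔ sval w ≤ x := by
  constructor
  · intro h
    exact h (sidx w) (chain_after_sidx w hw).2
  · intro h i hi
    have := hf i (sidx w) hi (chain_after_sidx w hw).2 (runStart_le_sidx w hw i hi)
    rw [sval] at h
    omega

lemma isCatalan_snoc (w : List ℕ) (hw : w ≠ []) (x : ℕ) :
    IsCatalan (w ++ [x]) ↔ IsCatalan w ∧ 1 ≤ x ∧ x ≤ gl w + 1 := by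
  have h0 : 0 < w.length := List.length_pos_iff.2 hw
  constructor
  · rintro ⟨-, h1, h2⟩
    rw [getD_snoc, if_neg (by omega)] at h1
    refine ⟨⟨hw, h1, ?_⟩, ?_⟩
    · intro i hi
      have := h2 i (by simp; omega)
      rw [getD_snoc, getD_snoc, if_neg (by omega), if_neg (by omega)] at this
      exact this
    · have := h2 (w.length - 1) (by simp; omega)
      rw [getD_snoc, getD_snoc, if_pos (by omega), if_neg (by omega)] at this
      rw [gl]
      exact this
  · rintro ⟨⟨-, h1, h2⟩, hx1, hx2⟩
    refine ⟨by simp, ?_, ?_⟩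
    · rw [getD_snoc, if_neg (by omega)]; exact h1
    · intro i hi
      simp only [List.length_append, List.length_cons, List.length_nil] at hi
      rw [getD_snoc, getD_snoc]
      rcases lt_or_eq_of_le (by omega : i + 1 ≤ w.length) with h | h
      · rw [if_neg (by omega), if_neg (by omega)]
        exact h2 i h
      · rw [if_pos h, if_neg (by omega)]
        have : i = w.length - 1 := by omega
        subst this
        exact ⟨hx1, hx2⟩

lemma isFlattened_snoc (w : List ℕ) (hw : w ≠ []) (x : ℕ) :
    IsFlattened (w ++ [x]) ↔
      IsFlattened w ∧ (x < gl w → ∀ i, RunStart w i → w.getD i 0 ≤ x) := by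
  have h0 : 0 < w.length := List.length_pos_iff.2 hw
  constructor
  · intro hf
    constructor
    · intro i j hi hj hij
      have hi' : i < w.length := hi.1
      have hj' : j < w.length := hj.1
      have := hf i j ((runStart_snoc_lt w x i hi').2 hi)
        ((runStart_snoc_lt w x j hj').2 hj) hij
      rw [getD_snoc, getD_snoc, if_neg (by omega), if_neg (by omega)] at this
      exact this
    · intro hlt i hi
      have hi1 := hi.1
      have := hf i w.length ((runStart_snoc_lt w x i hi1).2 hi)
        ((runStart_snoc_last w hw x).2 hlt) (by omega)
      rw [getD_snoc, getD_snoc, if_neg (by omega), if_pos rfl] at this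
      exact this
  · rintro ⟨hf, hg⟩ i j hi hj hij
    have hj' : j < w.length + 1 := by
      have := hj.1; simpa using this
    rw [getD_snoc, getD_snoc]
    rcases lt_or_eq_of_le (by omega : j ≤ w.length) with h | h
    · have hi' : i < w.length := by omega
      rw [if_neg (by omega), if_neg (by omega)]
      exact hf i j ((runStart_snoc_lt w x i hi').1 hi)
        ((runStart_snoc_lt w x j h).1 hj) hij
    · subst h
      rw [if_pos rfl]
      rcases eq_or_lt_of_le hij with h | h
      · rw [if_pos h]
      · rw [if_neg (by omega)]
        have hlt : x < gl w := (runStart_snoc_last w hw x).1 hj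
        exact hg hlt i ((runStart_snoc_lt w x i (by omega)).1 hi)

/-- The key extension characterization. -/
lemma mem_flatCat_snoc (n : ℕ) (hn : 1 ≤ n) (w : List ℕ) (x : ℕ) :
    (w ++ [x]) ∈ FlatCat (n + 1) ↔
      w ∈ FlatCat n ∧ sval w ≤ x ∧ x ≤ gl w + 1 := by
  constructor
  · rintro ⟨hlen, hc, hf⟩
    simp only [List.length_append, List.length_cons, List.length_nil] at hlen
    have hwlen : w.length = n := by omega
    have hw : w ≠ [] := by intro h; subst h; simp at hwlen; omega
    obtain ⟨hc', hx1, hx2⟩ := (isCatalan_snoc w hw x).1 hc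
    obtain ⟨hf', hg⟩ := (isFlattened_snoc w hw x).1 hf
    refine ⟨⟨hwlen, hc', hf'⟩, ?_, hx2⟩
    by_cases h : x < gl w
    · exact (cond_iff w hw hf' x).1 (hg h) 
    · exact le_trans (sval_le_gl w hw) (by omega)
  · rintro ⟨⟨hwlen, hc, hf⟩, hx1, hx2⟩
    have hw : w ≠ [] := by intro h; subst h; simp at hwlen; omega
    have h1x : 1 ≤ x := le_trans (one_le_sval w hc hf) hx1
    refine ⟨by simp [hwlen], (isCatalan_snoc w hw x).2 ⟨hc, h1x, hx2⟩,
      (isFlattened_snoc w hw x).2 ⟨hf, fun _ => (cond_iff w hw hf x).2 hx1⟩⟩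

lemma flatCat_one : FlatCat 1 = {[1]} := by
  ext w
  constructor
  · rintro ⟨hlen, hc, -⟩
    obtain ⟨a, rfl⟩ := List.length_eq_one_iff.1 hlen
    have := hc.2.1
    simp only [List.getD] at this
    simp_all
  · rintro rfl
    refine ⟨rfl, ⟨by simp, rfl, by simp⟩, ?_⟩
    intro i j hi hj _
    have hi' := hi.1
    have hj' := hj.1
    simp only [List.length_cons, List.length_nil] at hi' hj'
    interval_cases i <;> interval_cases j <;> rfl

/-- Recursive finite model of `FlatCat`. -/
def FC : ℕ → Finset (List ℕ)
  | 0 => ∅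
  | 1 => {[1]}
  | (n + 2) => (FC (n + 1)).biUnion
      (fun w => (Finset.Icc (sval w) (gl w + 1)).image (fun x => w ++ [x]))

lemma FC_spec : ∀ n, 1 ≤ n → ↑(FC n) = FlatCat n := by
  intro n
  induction n with
  | zero => omega
  | succ n ih =>
    intro _
    rcases Nat.eq_zero_or_pos n with rfl | hn
    · rw [show FC 1 = {[1]} from rfl, flatCat_one]; simp
    · obtain ⟨m, rfl⟩ : ∃ m, n = m + 1 := ⟨n - 1, by omega⟩
      ext u
      simp only [FC, Finset.coe_biUnion, Finset.mem_coe, Set.mem_iUnion,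
        Finset.mem_image, Finset.mem_Icc]
      constructor
      · rintro ⟨w, hw, x, hx, rfl⟩
        rw [← Finset.mem_coe, ih (by omega)] at hw
        exact (mem_flatCat_snoc (m + 1) (by omega) w x).2 ⟨hw, hx.1, hx.2⟩
      · intro hu
        have hlen : u.length = m + 2 := hu.1
        have hne : u ≠ [] := by intro h; subst h; simp at hlen
        obtain ⟨w, x, rfl⟩ := (List.eq_nil_or_concat' u).resolve_left hne
        obtain ⟨hw, hx1, hx2⟩ := (mem_flatCat_snoc (m + 1) (by omega) w x).1 hu
        refine ⟨w, ?_, x, ⟨hx1, hx2⟩, rfl⟩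
        rw [← Finset.mem_coe, ih (by omega)] at *
        exact hw

lemma FC_props (n : ℕ) (hn : 1 ≤ n) (w : List ℕ) (hw : w ∈ FC n) :
    w ≠ [] ∧ sval w ≤ gl w ∧ 1 ≤ gl w := by
  rw [← Finset.mem_coe, FC_spec n hn] at hw
  obtain ⟨hlen, hc, hf⟩ := hw
  have hne : w ≠ [] := by intro h; subst h; simp at hlen; omega
  exact ⟨hne, sval_le_gl w hne,
    le_trans (one_le_sval w hc hf) (sval_le_gl w hne)⟩

noncomputable def Sd (n : ℕ) : ℕ := ∑ w ∈ FC n, (gl w - sval w)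

lemma snoc_inj (w : List ℕ) : Function.Injective (fun x : ℕ => w ++ [x]) := by
  intro a b h
  simpa using h

lemma FC_card_succ (n : ℕ) (hn : 1 ≤ n) :
    (FC (n + 1)).card = 2 * (FC n).card + Sd n := by
  obtain ⟨m, rfl⟩ : ∃ m, n = m + 1 := ⟨n - 1, by omega⟩
  rw [show FC (m + 2) = (FC (m + 1)).biUnion
      (fun w => (Finset.Icc (sval w) (gl w + 1)).image (fun x => w ++ [x])) from rfl]
  rw [Finset.card_biUnion]
  · have hc : ∀ w ∈ FC (m + 1),
        ((Finset.Icc (sval w) (gl w + 1)).image (fun x => w ++ [x])).card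
          = (gl w - sval w) + 2 := by
      intro w hw
      obtain ⟨-, hsg, -⟩ := FC_props (m + 1) (by omega) w hw
      rw [Finset.card_image_of_injective _ (snoc_inj w), Nat.card_Icc]
      omega
    rw [Finset.sum_congr rfl hc, Finset.sum_add_distrib, Finset.sum_const,
      smul_eq_mul, Sd]
    omega
  · intro w1 h1 w2 h2 hne
    simp only [Finset.disjoint_left, Finset.mem_image]
    rintro u ⟨x, -, rfl⟩ ⟨y, -, h⟩
    have : w2 = w1 := (List.append_inj' h rfl).1
    exact hne this.symm

lemma Sd_succ (n : ℕ) (hn : 1 ≤ n) :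
    Sd (n + 1) = 2 * Sd n + (FC n).card := by
  obtain ⟨m, rfl⟩ : ∃ m, n = m + 1 := ⟨n - 1, by omega⟩
  rw [Sd, show FC (m + 2) = (FC (m + 1)).biUnion
      (fun w => (Finset.Icc (sval w) (gl w + 1)).image (fun x => w ++ [x])) from rfl]
  rw [Finset.sum_biUnion]
  · have hc : ∀ w ∈ FC (m + 1),
        (∑ u ∈ (Finset.Icc (sval w) (gl w + 1)).image (fun x => w ++ [x]),
          (gl u - sval u)) = 2 * (gl w - sval w) + 1 := ?_
    · rw [Finset.sum_congr rfl hc, Finset.sum_add_distrib, Finset.sum_const,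
        smul_eq_mul, ← Finset.mul_sum, Sd]
      omega
    intro w hw
    obtain ⟨hne, hsg, hg1⟩ := FC_props (m + 1) (by omega) w hw
    rw [Finset.sum_image (fun a _ b _ h => snoc_inj w h)]
    have hval : ∀ x ∈ Finset.Icc (sval w) (gl w + 1),
        gl (w ++ [x]) - sval (w ++ [x]) = if gl w ≤ x then x - sval w else 0 := by
      intro x hx
      rw [gl_snoc, sval_snoc w hne x]
      split <;> omega
    rw [Finset.sum_congr rfl hval]
    have hsplit : Finset.Icc (sval w) (gl w + 1) =
        insert (gl w + 1) (Finset.Icc (sval w) (gl w)) :=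
      (Finset.insert_Icc_right_eq_Icc_add_one (by omega)).symm
    rw [hsplit, Finset.sum_insert (by simp), if_pos (by omega)]
    have : ∑ x ∈ Finset.Icc (sval w) (gl w),
        (if gl w ≤ x then x - sval w else 0) = gl w - sval w := by
      rw [Finset.sum_eq_single (gl w)]
      · rw [if_pos le_rfl]
      · intro x hx hxne
        rw [Finset.mem_Icc] at hx
        rw [if_neg (by omega)]
      · intro h
        exact absurd (Finset.mem_Icc.2 ⟨hsg, le_rfl⟩) h
    rw [this]
    omega
  · intro w1 h1 w2 h2 hne
    simp only [Finset.disjoint_left, Finset.mem_image]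
    rintro u ⟨x, -, rfl⟩ ⟨y, -, h⟩
    have : w2 = w1 := (List.append_inj' h rfl).1
    exact hne this.symm

lemma joint (n : ℕ) :
    (FC (n + 1)).card + Sd (n + 1) = 3 ^ n ∧ (FC (n + 1)).card = Sd (n + 1) + 1 := by
  induction n with
  | zero =>
    have h1 : FC 1 = {[1]} := rfl
    have h2 : Sd 1 = 0 := by
      rw [Sd, h1]
      simp [gl, sval, sidx, trl]
    rw [h1, h2]
    simp
  | succ n ih =>
    obtain ⟨ih1, ih2⟩ := ih
    rw [FC_card_succ (n + 1) (by omega), Sd_succ (n + 1) (by omega)]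
    constructor
    · rw [pow_succ]
      omega
    · omega

/-- For every integer `n ≥ 1`, twice the number of flattened Catalan words of
length `n` equals `3^(n-1) + 1`. -/
theorem flatCat_ncard (n : ℕ) (hn : 1 ≤ n) :
    2 * (FlatCat n).ncard = 3 ^ (n - 1) + 1 := by
  obtain ⟨m, rfl⟩ : ∃ m, n = m + 1 := ⟨n - 1, by omega⟩
  rw [← FC_spec (m + 1) (by omega), Set.ncard_coe_finset]
  obtain ⟨h1, h2⟩ := joint m
  simp only [Nat.add_sub_cancel]
  omega
end

section
/- For every integer n ≥ 2, the number of flattened Catalan words of length n containing no levels (no index i with π_i = π_{i+1}) is 2^(n-2). -/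
open scoped BigOperators

/-!
A level-free Catalan word moves only by ascents of one and strict descents, and the runs start
exactly at the descents; being flattened then says that each descent lands no lower than the head
of the run it leaves. So after a letter `c` in a run headed by `a`, the next letter is `c + 1`
(same run) or one of the `c - a` values `x ∈ [a, c)` (a new run headed by `x`). The number
`f m d` of continuations of length `m` with `d = c - a` therefore satisfies
`f (m + 1) d = f m (d + 1) + d * f m 0`, solved by `f (m + 1) d = 2 ^ m * (d + 1)`, and a word of
length `n` is `1` followed by a continuation of length `n - 1` from `a = c = 1`.
-/

namespace FlatCatalan

/-- The first letter of the increasing run of `u` containing position `i`, where `a` stands in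
for the first letter of the initial run. -/
def runHead (a : ℕ) (u : ℕ → ℕ) : ℕ → ℕ
  | 0 => a
  | i + 1 => if u (i + 1) < u i then u (i + 1) else runHead a u i

def FlatSteps (a : ℕ) (u : ℕ → ℕ) (n : ℕ) : Prop :=
  ∀ i, i + 1 < n → u (i + 1) = u i + 1 ∨ (runHead a u i ≤ u (i + 1) ∧ u (i + 1) < u i)

section
variable {a : ℕ} {u : ℕ → ℕ}

theorem runHead_succ (a : ℕ) (u : ℕ → ℕ) (i : ℕ) :
    runHead a u (i + 1) = runHead (runHead a u 1) (fun j => u (j + 1)) i := by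
  induction i with
  | zero => rfl
  | succ i ih => rw [runHead, ih]; rfl

theorem flatSteps_succ_succ_iff {n : ℕ} :
    FlatSteps a u (n + 2) ↔ (u 1 = u 0 + 1 ∨ (a ≤ u 1 ∧ u 1 < u 0)) ∧
      FlatSteps (runHead a u 1) (fun j => u (j + 1)) (n + 1) := by
  simp only [FlatSteps, ← runHead_succ]
  constructor
  · intro h
    exact ⟨h 0 (by omega), fun i hi => h (i + 1) (by omega)⟩
  · rintro ⟨h0, h⟩ (_ | i) hi
    · exact h0
    · exact h i (by omega)

theorem runHead_mono {n : ℕ} (h : FlatSteps a u n) {i j : ℕ} (hij : i ≤ j) (hj : j < n) :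
    runHead a u i ≤ runHead a u j := by
  induction j, hij using Nat.le_induction with
  | base => rfl
  | succ j _ ih =>
    refine (ih (by omega)).trans ?_
    rw [runHead]
    split_ifs with hdesc
    · exact ((h j hj).resolve_left (by omega)).1
    · rfl

end

def flatTails : ℕ → ℕ → ℕ → Finset (List ℕ)
  | 0, _, _ => {[]}
  | m + 1, a, c => (flatTails m a (c + 1)).image (List.cons (c + 1)) ∪
      (Finset.Ico a c).biUnion fun x => (flatTails m x x).image (List.cons x)

theorem mem_flatTails {m a c : ℕ} {t : List ℕ} :
    t ∈ flatTails m a c ↔ t.length = m ∧ FlatSteps a (fun j => (c :: t).getD j 0) (m + 1) := by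
  induction m generalizing a c t with
  | zero =>
    simp only [flatTails, Finset.mem_singleton, List.length_eq_zero_iff, iff_self_and]
    intro _ i hi
    omega
  | succ m ih =>
    rcases t with _ | ⟨y, s⟩
    · simp [flatTails]
    simp only [flatTails, Finset.mem_union, Finset.mem_image, Finset.mem_biUnion, Finset.mem_Ico,
      List.cons.injEq, flatSteps_succ_succ_iff, List.length_cons, Nat.add_right_cancel_iff,
      List.getD_cons_succ, List.getD_cons_zero]
    have hhead : runHead a (fun j => (c :: y :: s).getD j 0) 1 = if y < c then y else a := rfl
    rw [hhead]
    by_cases hy : y = c + 1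
    · subst hy
      simp [ih]
    · by_cases hyc : y < c
      · simp [Ne.symm hy, hyc, ih]
        tauto
      · simp [hy, Ne.symm hy, hyc]

theorem card_flatTails_succ_eq (m a c : ℕ) :
    (flatTails (m + 1) a c).card =
      (flatTails m a (c + 1)).card + ∑ x ∈ Finset.Ico a c, (flatTails m x x).card := by
  have hcons (x : ℕ) (s : Finset (List ℕ)) : (s.image (List.cons x)).card = s.card :=
    Finset.card_image_of_injective _ List.cons_injective
  have hhead {x y : ℕ} (hxy : x ≠ y) (s t : Finset (List ℕ)) :
      Disjoint (s.image (List.cons x)) (t.image (List.cons y)) := by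
    simp [Finset.disjoint_left, hxy.symm]
  rw [flatTails, Finset.card_union_of_disjoint, Finset.card_biUnion, hcons]
  · simp only [hcons]
  · intro x _ y _ hxy
    exact hhead hxy _ _
  · refine (Finset.disjoint_biUnion_right _ _ _).mpr fun x hx => hhead ?_ _ _
    have := (Finset.mem_Ico.mp hx).2
    omega

theorem card_flatTails_succ {m a c : ℕ} (hac : a ≤ c) :
    (flatTails (m + 1) a c).card = 2 ^ m * (c + 1 - a) := by
  induction m generalizing a c with
  | zero =>
    rw [card_flatTails_succ_eq]
    simp only [flatTails, Finset.card_singleton, Finset.sum_const, Nat.card_Ico, smul_eq_mul]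
    omega
  | succ m ih =>
    rw [card_flatTails_succ_eq, ih (by omega), Finset.sum_congr rfl fun x _ => ih le_rfl]
    simp only [Finset.sum_const, Nat.card_Ico, smul_eq_mul, Nat.add_sub_cancel_left, mul_one]
    rw [pow_succ, show c + 1 + 1 - a = c - a + 2 by omega, show c + 1 - a = c - a + 1 by omega]
    ring

section Words
variable {w : List ℕ}

theorem getD_eq_runHead_of_runStart {a k : ℕ} (h0 : w.getD 0 0 = a) (hk : RunStart w k) :
    w.getD k 0 = runHead a (fun j => w.getD j 0) k := by
  obtain ⟨-, rfl | hdesc⟩ := hk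
  · exact h0
  · cases k with
    | zero => exact absurd hdesc (lt_irrefl _)
    | succ k => rw [runHead, if_pos (by simpa using hdesc)]

theorem exists_runStart_getD_eq_runHead {a i : ℕ} (h0 : w.getD 0 0 = a) (hi : i < w.length) :
    ∃ r ≤ i, RunStart w r ∧ w.getD r 0 = runHead a (fun j => w.getD j 0) i := by
  induction i with
  | zero => exact ⟨0, le_rfl, ⟨hi, Or.inl rfl⟩, h0⟩
  | succ i ih =>
    by_cases hdesc : w.getD (i + 1) 0 < w.getD i 0
    · exact ⟨i + 1, le_rfl, ⟨hi, Or.inr hdesc⟩, by rw [runHead, if_pos hdesc]⟩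
    · obtain ⟨r, hri, hr, hval⟩ := ih (by omega)
      exact ⟨r, by omega, hr, by rw [runHead, if_neg hdesc, hval]⟩

theorem flatSteps_of_isFlattened (hw : IsCatalan w) (hflat : IsFlattened w)
    (hlev : ∀ i, i + 1 < w.length → w.getD i 0 ≠ w.getD (i + 1) 0) :
    FlatSteps 1 (fun j => w.getD j 0) w.length := by
  obtain ⟨-, h0, hstep⟩ := hw
  intro i hi
  by_cases hasc : w.getD (i + 1) 0 = w.getD i 0 + 1
  · exact Or.inl hasc
  have hdesc : w.getD (i + 1) 0 < w.getD i 0 := by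
    have := hstep i hi
    have := hlev i hi
    omega
  obtain ⟨r, hri, hr, hval⟩ := exists_runStart_getD_eq_runHead h0 (i := i) (by omega)
  exact Or.inr ⟨hval ▸ hflat r (i + 1) hr ⟨hi, Or.inr hdesc⟩ (by omega), hdesc⟩

theorem isFlattened_of_flatSteps {a : ℕ} (h0 : w.getD 0 0 = a)
    (h : FlatSteps a (fun j => w.getD j 0) w.length) : IsFlattened w := by
  intro i j hi hj hij
  rw [getD_eq_runHead_of_runStart h0 hi, getD_eq_runHead_of_runStart h0 hj]
  exact runHead_mono h hij hj.1

theorem isCatalan_of_flatSteps (hne : w ≠ []) (h0 : w.getD 0 0 = 1)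
    (h : FlatSteps 1 (fun j => w.getD j 0) w.length) : IsCatalan w := by
  refine ⟨hne, h0, fun i hi => ?_⟩
  have hhead : 1 ≤ runHead 1 (fun j => w.getD j 0) i := runHead_mono h (Nat.zero_le i) (by omega)
  have hstep := h i hi
  dsimp only at hstep
  omega

theorem levelFree_mem_flatCat_iff {n : ℕ} :
    (w ∈ FlatCat n ∧ ∀ i, i + 1 < w.length → w.getD i 0 ≠ w.getD (i + 1) 0) ↔
      w.length = n ∧ w ≠ [] ∧ w.getD 0 0 = 1 ∧ FlatSteps 1 (fun j => w.getD j 0) w.length := by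
  constructor
  · rintro ⟨⟨hlen, hcat, hflat⟩, hlev⟩
    exact ⟨hlen, hcat.1, hcat.2.1, flatSteps_of_isFlattened hcat hflat hlev⟩
  · rintro ⟨hlen, hne, h0, h⟩
    refine ⟨⟨hlen, isCatalan_of_flatSteps hne h0 h, isFlattened_of_flatSteps h0 h⟩, fun i hi => ?_⟩
    have hstep := h i hi
    dsimp only at hstep
    omega

end Words

theorem levelFree_flatCat_eq_image (m : ℕ) :
    {w ∈ FlatCat (m + 1) | ∀ i, i + 1 < w.length → w.getD i 0 ≠ w.getD (i + 1) 0} =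
      ((flatTails m 1 1).image (List.cons 1) : Set (List ℕ)) := by
  ext w
  simp only [levelFree_mem_flatCat_iff, Finset.coe_image, Set.mem_image,
    Finset.mem_coe, mem_flatTails]
  constructor
  · rintro ⟨hlen, hne, h0, h⟩
    obtain ⟨x, t, rfl⟩ := List.exists_cons_of_ne_nil hne
    obtain rfl : x = 1 := h0
    exact ⟨t, ⟨by simpa using hlen, by simpa [hlen] using h⟩, rfl⟩
  · rintro ⟨t, ⟨hlen, h⟩, rfl⟩
    exact ⟨by simp [hlen], List.cons_ne_nil _ _, rfl, by simpa [hlen] using h⟩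

end FlatCatalan

/-- For every integer `n ≥ 2`, the number of flattened Catalan words of length
`n` containing no levels is `2^(n-2)`. -/
theorem flatCat_no_levels_ncard (n : ℕ) (hn : 2 ≤ n) :
    {w ∈ FlatCat n | ∀ i, i + 1 < w.length → w.getD i 0 ≠ w.getD (i + 1) 0}.ncard
      = 2 ^ (n - 2) := by
  obtain ⟨m, rfl⟩ : ∃ m, n = m + 2 := ⟨n - 2, by omega⟩
  rw [FlatCatalan.levelFree_flatCat_eq_image, Set.ncard_coe_finset,
    Finset.card_image_of_injective _ List.cons_injective, FlatCatalan.card_flatTails_succ le_rfl]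
  simp
end

section
/- For every integer n ≥ 1: tot_n(12) = (n−1)(3^(n−1)+1)/4, tot_n(21) = (n−1)(3^(n−2)−1)/4, and tot_n(11) = (n−1)(3^(n−2)+1)/2 (equivalently, 4·tot_n(12) = (n−1)(3^(n−1)+1), 4·tot_n(21) = (n−1)(3^(n−2)−1), and 2·tot_n(11) = (n−1)(3^(n−2)+1), where for n = 1 the values 3^(n−2) are interpreted via the vanishing factor n−1). -/
open scoped BigOperators

namespace FCP

def stp (p : ℕ × ℕ) (x : ℕ) : ℕ × ℕ := if x < p.2 then (x, x) else (p.1, x)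

def st (w : List ℕ) : ℕ × ℕ := w.foldl stp (1, 0)

lemma st_append (w : List ℕ) (x : ℕ) : st (w ++ [x]) = stp (st w) x := by
  simp [st, List.foldl_append]

lemma st_append_snd (w : List ℕ) (x : ℕ) : (st (w ++ [x])).2 = x := by
  rw [st_append]; unfold stp; split <;> rfl

lemma getD_app (l : List ℕ) (x : ℕ) (i : ℕ) (h : i < l.length) :
    (l ++ [x]).getD i 0 = l.getD i 0 := List.getD_append l [x] 0 i h

lemma getD_app_last (l : List ℕ) (x : ℕ) : (l ++ [x]).getD l.length 0 = x := by
  rw [List.getD_append_right] <;> simp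

lemma runStart_append (w : List ℕ) (x : ℕ) (hw : w ≠ []) (i : ℕ) :
    RunStart (w ++ [x]) i ↔
      RunStart w i ∨ (i = w.length ∧ x < w.getD (w.length - 1) 0) := by
  have hlen : 0 < w.length := List.length_pos_iff.mpr hw
  unfold RunStart
  constructor
  · rintro ⟨hi, h0⟩
    simp only [List.length_append, List.length_singleton] at hi
    rcases Nat.lt_or_ge i w.length with hlt | hge
    · left
      refine ⟨hlt, ?_⟩
      rcases h0 with h0 | h0
      · exact Or.inl h0
      · right
        rwa [getD_app _ _ _ hlt, getD_app _ _ _ (by omega)] at h0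
    · have hi' : i = w.length := by omega
      subst hi'
      right
      rcases h0 with h0 | h0
      · omega
      · refine ⟨rfl, ?_⟩
        rwa [getD_app_last, getD_app _ _ _ (by omega)] at h0
  · rintro (⟨hi, h0⟩ | ⟨rfl, h0⟩)
    · refine ⟨by simp; omega, ?_⟩
      rcases h0 with h0 | h0
      · exact Or.inl h0
      · right
        rwa [getD_app _ _ _ hi, getD_app _ _ _ (by omega)]
    · refine ⟨by simp, Or.inr ?_⟩
      rwa [getD_app_last, getD_app _ _ _ (by omega)]

lemma isCatalan_append (w : List ℕ) (x : ℕ) (hw : w ≠ []) :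
    IsCatalan (w ++ [x]) ↔
      IsCatalan w ∧ 1 ≤ x ∧ x ≤ w.getD (w.length - 1) 0 + 1 := by
  have hlen : 0 < w.length := List.length_pos_iff.mpr hw
  unfold IsCatalan
  constructor
  · rintro ⟨-, h1, h2⟩
    rw [getD_app _ _ _ hlen] at h1
    have hx := h2 (w.length - 1) (by simp; omega)
    rw [show w.length - 1 + 1 = w.length by omega, getD_app_last,
      getD_app _ _ _ (by omega)] at hx
    refine ⟨⟨hw, h1, fun i hi => ?_⟩, hx.1, hx.2⟩
    have := h2 i (by simp; omega)
    rwa [getD_app _ _ _ (by omega), getD_app _ _ _ (by omega)] at this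
  · rintro ⟨⟨-, h1, h2⟩, hx1, hx2⟩
    refine ⟨by simp, by rw [getD_app _ _ _ hlen]; exact h1, fun i hi => ?_⟩
    simp only [List.length_append, List.length_singleton] at hi
    rcases Nat.lt_or_ge (i + 1) w.length with hlt | hge
    · rw [getD_app _ _ _ hlt, getD_app _ _ _ (by omega)]
      exact h2 i hlt
    · obtain rfl : i = w.length - 1 := by omega
      rw [show w.length - 1 + 1 = w.length by omega, getD_app_last,
        getD_app _ _ _ (by omega)]
      exact ⟨hx1, hx2⟩

end FCP

namespace FCP2
open FCP

def F : ℕ → Finset (List ℕ)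
  | 0 => ∅
  | 1 => {[1]}
  | (n+2) => (F (n+1)).biUnion fun w =>
      (Finset.Icc (st w).1 ((st w).2 + 1)).image fun x => w ++ [x]

def Extra (w : List ℕ) : Prop :=
  1 ≤ (st w).1 ∧ (st w).1 ≤ (st w).2 ∧ (st w).2 = w.getD (w.length - 1) 0 ∧
    (∀ i, RunStart w i → w.getD i 0 ≤ (st w).1) ∧
    ∃ i, RunStart w i ∧ w.getD i 0 = (st w).1

theorem inv (n : ℕ) :
    (∀ w, w ∈ F n ↔ w ∈ FlatCat n) ∧ (∀ w ∈ F n, Extra w) := by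
  induction n using Nat.strong_induction_on with
  | _ n ih =>
    match n with
    | 0 =>
      constructor
      · intro w
        simp only [F, Finset.notMem_empty, false_iff]
        rintro ⟨hl, ⟨hne, -⟩, -⟩
        exact hne (List.length_eq_zero_iff.mp hl)
      · intro w hw; simp [F] at hw
    | 1 =>
      have hst : st [1] = (1, 1) := by decide
      constructor
      · intro w
        simp only [F, Finset.mem_singleton]
        constructor
        · rintro rfl
          refine ⟨rfl, ⟨by simp, rfl, by intro i hi; simp at hi⟩, ?_⟩
          intro i j hi hj hij
          unfold RunStart at hi hj
          simp only [List.length_singleton] at hi hj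
          obtain rfl : i = 0 := by omega
          obtain rfl : j = 0 := by omega
          exact le_refl _
        · rintro ⟨hl, ⟨-, h1, -⟩, -⟩
          match w, hl with
          | [a], _ =>
            have ha : a = 1 := by simpa using h1
            rw [ha]
      · intro w hw
        simp only [F, Finset.mem_singleton] at hw
        subst hw
        refine ⟨by rw [hst], by rw [hst], by rw [hst]; rfl, ?_, 0, ?_, ?_⟩
        · intro i hi
          unfold RunStart at hi
          simp only [List.length_singleton] at hi
          obtain rfl : i = 0 := by omega
          rw [hst]; rfl
        · exact ⟨by simp, Or.inl rfl⟩
        · rw [hst]; rfl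
    | (n+2) =>
      obtain ⟨ihm, ihe⟩ := ih (n+1) (by omega)
      constructor
      · intro w
        constructor
        · -- F (n+2) ⊆ FlatCat (n+2)
          intro hw
          simp only [F, Finset.mem_biUnion, Finset.mem_image, Finset.mem_Icc] at hw
          obtain ⟨u, hu, x, ⟨hxr, hxv⟩, rfl⟩ := hw
          obtain ⟨hul, huc, huf⟩ := (ihm u).mp hu
          obtain ⟨he1, he2, he3, he4, he5⟩ := ihe u hu
          have hune : u ≠ [] := by rintro rfl; simp at hul
          refine ⟨by simp [hul], ?_, ?_⟩
          · rw [isCatalan_append _ _ hune]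
            exact ⟨huc, by omega, by rw [← he3]; omega⟩
          · intro i j hi hj hij
            rw [runStart_append _ _ hune] at hi hj
            rcases hj with hj | ⟨rfl, hxlt⟩
            · rcases hi with hi | ⟨rfl, -⟩
              · rw [getD_app _ _ _ hi.1, getD_app _ _ _ hj.1]
                exact huf i j hi hj hij
              · exact absurd hij (by have := hj.1; omega)
            · rcases hi with hi | ⟨rfl, -⟩
              · rw [getD_app _ _ _ hi.1, getD_app_last]
                exact le_trans (he4 i hi) hxr
              · omega
        · -- FlatCat (n+2) ⊆ F (n+2)
          rintro ⟨hl, hc, hf⟩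
          have hwne : w ≠ [] := by rintro rfl; simp at hl
          obtain ⟨u, x, rfl⟩ : ∃ u x, w = u ++ [x] := by
            rcases List.eq_nil_or_concat w with h | ⟨u, x, h⟩
            · exact absurd h hwne
            · exact ⟨u, x, by simpa using h⟩
          have hul : u.length = n + 1 := by simp at hl; omega
          have hune : u ≠ [] := by rintro rfl; simp at hul
          rw [isCatalan_append _ _ hune] at hc
          have huf : IsFlattened u := by
            intro i j hi hj hij
            have hi' : RunStart (u ++ [x]) i :=
              (runStart_append _ _ hune i).mpr (Or.inl hi)
            have hj' : RunStart (u ++ [x]) j :=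
              (runStart_append _ _ hune j).mpr (Or.inl hj)
            have := hf i j hi' hj' hij
            rwa [getD_app _ _ _ hi.1, getD_app _ _ _ hj.1] at this
          have humem : u ∈ F (n+1) := (ihm u).mpr ⟨hul, hc.1, huf⟩
          obtain ⟨he1, he2, he3, he4, he5⟩ := ihe u humem
          have hxv : x ≤ (st u).2 + 1 := by rw [he3]; exact hc.2.2
          have hxr : (st u).1 ≤ x := by
            rcases Nat.lt_or_ge x (u.getD (u.length - 1) 0) with hlt | hge
            · obtain ⟨j, hj, hjv⟩ := he5
              have hjw : RunStart (u ++ [x]) j :=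
                (runStart_append _ _ hune j).mpr (Or.inl hj)
              have hlw : RunStart (u ++ [x]) u.length :=
                (runStart_append _ _ hune _).mpr (Or.inr ⟨rfl, hlt⟩)
              have := hf j u.length hjw hlw (le_of_lt hj.1)
              rwa [getD_app _ _ _ hj.1, getD_app_last, hjv] at this
            · rw [← he3] at hge; omega
          simp only [F, Finset.mem_biUnion, Finset.mem_image, Finset.mem_Icc]
          exact ⟨u, humem, x, ⟨hxr, hxv⟩, rfl⟩
      · -- Extra
        intro w hw
        simp only [F, Finset.mem_biUnion, Finset.mem_image, Finset.mem_Icc] at hw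
        obtain ⟨u, hu, x, ⟨hxr, hxv⟩, rfl⟩ := hw
        obtain ⟨hul, huc, huf⟩ := (ihm u).mp hu
        obtain ⟨he1, he2, he3, he4, he5⟩ := ihe u hu
        have hune : u ≠ [] := by rintro rfl; simp at hul
        have hlast : (u ++ [x]).getD ((u ++ [x]).length - 1) 0 = x := by
          simp only [List.length_append, List.length_singleton,
            Nat.add_sub_cancel]
          exact getD_app_last u x
        unfold Extra
        rw [st_append]
        unfold stp
        split
        · rename_i hxlt
          refine ⟨by omega, le_refl _, by rw [hlast], ?_, u.length, ?_, ?_⟩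
          · intro i hi
            rw [runStart_append _ _ hune] at hi
            rcases hi with hi | ⟨rfl, -⟩
            · rw [getD_app _ _ _ hi.1]
              calc u.getD i 0 ≤ (st u).1 := he4 i hi
                _ ≤ x := hxr
            · rw [getD_app_last]
          · exact (runStart_append _ _ hune _).mpr
              (Or.inr ⟨rfl, by rwa [← he3]⟩)
          · exact getD_app_last u x
        · rename_i hxge
          push_neg at hxge
          refine ⟨he1, by omega, by rw [hlast], ?_, ?_⟩
          · intro i hi
            rw [runStart_append _ _ hune] at hi
            rcases hi with hi | ⟨rfl, hlt⟩
            · rw [getD_app _ _ _ hi.1]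
              exact he4 i hi
            · rw [← he3] at hlt; omega
          · obtain ⟨j, hj, hjv⟩ := he5
            refine ⟨j, (runStart_append _ _ hune j).mpr (Or.inl hj), ?_⟩
            rw [getD_app _ _ _ hj.1, hjv]

end FCP2

namespace FCP3
open FCP FCP2

def cnt (P : ℕ → ℕ → Prop) [DecidableRel P] (w : List ℕ) : ℕ :=
  ((Finset.range (w.length - 1)).filter fun i => P (w.getD i 0) (w.getD (i+1) 0)).card

lemma cnt_append (P : ℕ → ℕ → Prop) [DecidableRel P]
    (w : List ℕ) (x : ℕ) (hw : w ≠ []) :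
    cnt P (w ++ [x]) = cnt P w +
      if P (w.getD (w.length - 1) 0) x then 1 else 0 := by
  have hm : 1 ≤ w.length := List.length_pos_iff.mpr hw
  unfold cnt
  have h1 : (w ++ [x]).length - 1 = (w.length - 1) + 1 := by simp; omega
  rw [h1, Finset.range_add_one, Finset.filter_insert]
  have hcong : ∀ i ∈ Finset.range (w.length - 1),
      (P ((w ++ [x]).getD i 0) ((w ++ [x]).getD (i+1) 0)) =
        (P (w.getD i 0) (w.getD (i+1) 0)) := by
    intro i hi
    simp only [Finset.mem_range] at hi
    rw [getD_app _ _ _ (by omega), getD_app _ _ _ (by omega)]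
  rw [Finset.filter_congr (fun i hi => by rw [hcong i hi])]
  have hlastD : (w ++ [x]).getD (w.length - 1) 0 = w.getD (w.length - 1) 0 :=
    getD_app _ _ _ (by omega)
  have hlastD2 : (w ++ [x]).getD ((w.length - 1) + 1) 0 = x := by
    rw [show (w.length - 1) + 1 = w.length by omega]; exact getD_app_last w x
  rw [hlastD, hlastD2]
  split
  · rw [Finset.card_insert_of_notMem (by simp), add_comm]
  · rfl

lemma occAt_12 (w : List ℕ) (i : ℕ) :
    OccAt [1, 2] w i ↔ i + 2 ≤ w.length ∧ w.getD i 0 < w.getD (i+1) 0 := by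
  unfold OccAt
  simp only [List.length_cons, List.length_nil]
  constructor
  · rintro ⟨h1, h2⟩
    refine ⟨h1, ?_⟩
    have := h2 0 (by omega) 1 (by omega)
    simpa using this
  · rintro ⟨h1, h2⟩
    refine ⟨h1, ?_⟩
    intro s hs t ht
    interval_cases s <;> interval_cases t <;>
      simp only [List.getD_cons_zero, List.getD_cons_succ, Nat.add_zero] <;> omega

lemma occAt_21 (w : List ℕ) (i : ℕ) :
    OccAt [2, 1] w i ↔ i + 2 ≤ w.length ∧ w.getD (i+1) 0 < w.getD i 0 := by
  unfold OccAt
  simp only [List.length_cons, List.length_nil]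
  constructor
  · rintro ⟨h1, h2⟩
    refine ⟨h1, ?_⟩
    have := h2 1 (by omega) 0 (by omega)
    simpa using this
  · rintro ⟨h1, h2⟩
    refine ⟨h1, ?_⟩
    intro s hs t ht
    interval_cases s <;> interval_cases t <;>
      simp only [List.getD_cons_zero, List.getD_cons_succ, Nat.add_zero] <;> omega

lemma occAt_11 (w : List ℕ) (i : ℕ) :
    OccAt [1, 1] w i ↔ i + 2 ≤ w.length ∧ w.getD i 0 = w.getD (i+1) 0 := by
  unfold OccAt
  simp only [List.length_cons, List.length_nil]
  constructor
  · rintro ⟨h1, h2⟩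
    refine ⟨h1, ?_⟩
    have ha := h2 0 (by omega) 1 (by omega)
    have hb := h2 1 (by omega) 0 (by omega)
    simp only [List.getD_cons_zero, List.getD_cons_succ, Nat.add_zero] at ha hb
    omega
  · rintro ⟨h1, h2⟩
    refine ⟨h1, ?_⟩
    intro s hs t ht
    interval_cases s <;> interval_cases t <;>
      simp only [List.getD_cons_zero, List.getD_cons_succ, Nat.add_zero] <;> omega

lemma numOcc_eq_cnt (P : ℕ → ℕ → Prop) [DecidableRel P]
    (τ w : List ℕ)
    (h : ∀ i, OccAt τ w i ↔ i + 2 ≤ w.length ∧ P (w.getD i 0) (w.getD (i+1) 0)) :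
    numOcc τ w = cnt P w := by
  unfold numOcc cnt
  have : {i | OccAt τ w i} =
      ↑((Finset.range (w.length - 1)).filter fun i => P (w.getD i 0) (w.getD (i+1) 0)) := by
    ext i
    simp only [Set.mem_setOf_eq, h i, Finset.coe_filter, Finset.mem_range, Set.mem_setOf_eq]
    constructor
    · rintro ⟨h1, h2⟩; exact ⟨by omega, h2⟩
    · rintro ⟨h1, h2⟩; exact ⟨by omega, h2⟩
  rw [this, Set.ncard_coe_finset]

end FCP3

namespace FCP4
open FCP FCP2 FCP3

def dd (w : List ℕ) : ℕ := (st w).2 - (st w).1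
def asc (w : List ℕ) : ℕ := cnt (· < ·) w
def des (w : List ℕ) : ℕ := cnt (fun a b => b < a) w
def lev (w : List ℕ) : ℕ := cnt (· = ·) w

lemma dd_append (u : List ℕ) (x : ℕ) :
    dd (u ++ [x]) = if x < (st u).2 then 0 else x - (st u).1 := by
  unfold dd
  rw [st_append]
  unfold stp
  split <;> simp

lemma asc_append (u : List ℕ) (x : ℕ) (hu : u ≠ [])
    (he3 : (st u).2 = u.getD (u.length - 1) 0) :
    asc (u ++ [x]) = asc u + if (st u).2 < x then 1 else 0 := by
  unfold asc; rw [cnt_append _ _ _ hu, he3]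

lemma des_append (u : List ℕ) (x : ℕ) (hu : u ≠ [])
    (he3 : (st u).2 = u.getD (u.length - 1) 0) :
    des (u ++ [x]) = des u + if x < (st u).2 then 1 else 0 := by
  unfold des; rw [cnt_append _ _ _ hu, he3]

lemma lev_append (u : List ℕ) (x : ℕ) (hu : u ≠ [])
    (he3 : (st u).2 = u.getD (u.length - 1) 0) :
    lev (u ++ [x]) = lev u + if (st u).2 = x then 1 else 0 := by
  unfold lev; rw [cnt_append _ _ _ hu, he3]

lemma inner_eval (r v : ℕ) (h2 : r ≤ v) (f : ℕ → ℕ) (c0 cv cv1 : ℕ)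
    (hlow : ∀ x, r ≤ x → x < v → f x = c0) (hv : f v = cv) (hv1 : f (v+1) = cv1) :
    ∑ x ∈ Finset.Icc r (v+1), f x = (v - r) * c0 + cv + cv1 := by
  rw [Finset.sum_Icc_succ_top (by omega) f]
  rcases Nat.eq_or_lt_of_le h2 with rfl | hlt
  · simp [hv, hv1]
  · have hv' : v = (v - 1) + 1 := by omega
    rw [hv', Finset.sum_Icc_succ_top (by omega) f, ← hv']
    have : ∑ x ∈ Finset.Icc r (v-1), f x = (v - r) * c0 := by
      rw [Finset.sum_congr rfl (fun x hx => by
        simp only [Finset.mem_Icc] at hx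
        exact hlow x hx.1 (by omega)), Finset.sum_const, Nat.card_Icc, smul_eq_mul]
      congr 1
      omega
    rw [this, hv, hv1]

lemma mem_F_facts {n : ℕ} {u : List ℕ} (hu : u ∈ F (n+1)) :
    u ≠ [] ∧ 1 ≤ (st u).1 ∧ (st u).1 ≤ (st u).2 ∧
      (st u).2 = u.getD (u.length - 1) 0 ∧ u.length = n + 1 := by
  obtain ⟨hl, -, -⟩ := ((inv (n+1)).1 u).mp hu
  obtain ⟨he1, he2, he3, -, -⟩ := (inv (n+1)).2 u hu
  exact ⟨by rintro rfl; simp at hl, he1, he2, he3, hl⟩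

lemma sum_F (n : ℕ) (g : List ℕ → ℕ) :
    ∑ w ∈ F (n+2), g w =
      ∑ u ∈ F (n+1), ∑ x ∈ Finset.Icc (st u).1 ((st u).2 + 1), g (u ++ [x]) := by
  show ∑ w ∈ Finset.biUnion _ _, g w = _
  rw [Finset.sum_biUnion ?hd]
  · apply Finset.sum_congr rfl
    intro u hu
    rw [Finset.sum_image ?hi]
    intro x _ y _ hxy
    have := List.append_cancel_left hxy
    simpa using this
  case hd =>
    intro a ha b hb hab
    simp only [Finset.disjoint_left, Finset.mem_image]
    rintro w ⟨x, hx, hxw⟩ ⟨y, hy, hyw⟩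
    have hla := (mem_F_facts ha).2.2.2.2
    have hlb := (mem_F_facts hb).2.2.2.2
    have heq : a ++ [x] = b ++ [y] := by rw [hxw, hyw]
    exact hab ((List.append_inj heq (by omega)).1)

def Sq (n : ℕ) : ℕ := (F n).card
def Tq (n : ℕ) : ℕ := ∑ w ∈ F n, dd w
def Aq (n : ℕ) : ℕ := ∑ w ∈ F n, asc w
def Apq (n : ℕ) : ℕ := ∑ w ∈ F n, dd w * asc w
def Dq (n : ℕ) : ℕ := ∑ w ∈ F n, des w
def Dpq (n : ℕ) : ℕ := ∑ w ∈ F n, dd w * des w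
def Lq (n : ℕ) : ℕ := ∑ w ∈ F n, lev w
def Lpq (n : ℕ) : ℕ := ∑ w ∈ F n, dd w * lev w

lemma sum_comb (s : Finset (List ℕ)) (G : List ℕ → ℕ) (α β γ δ : ℕ) :
    ∑ u ∈ s, (α * (dd u * G u) + β * G u + γ * dd u + δ) =
      α * (∑ u ∈ s, dd u * G u) + β * (∑ u ∈ s, G u) +
        γ * (∑ u ∈ s, dd u) + δ * s.card := by
  rw [Finset.sum_add_distrib, Finset.sum_add_distrib, Finset.sum_add_distrib,
    Finset.sum_const, ← Finset.mul_sum, ← Finset.mul_sum, ← Finset.mul_sum,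
    smul_eq_mul, mul_comm s.card δ]

lemma recS (n : ℕ) : Sq (n+2) = Tq (n+1) + 2 * Sq (n+1) := by
  unfold Sq Tq
  rw [Finset.card_eq_sum_ones, sum_F n (fun _ => 1)]
  have h : ∀ u ∈ F (n+1),
      (∑ x ∈ Finset.Icc (st u).1 ((st u).2 + 1), 1) =
        0 * (dd u * 1) + 0 * 1 + 1 * dd u + 2 := by
    intro u hu
    obtain ⟨hune, he1, he2, he3, -⟩ := mem_F_facts hu
    rw [inner_eval _ _ he2 _ 1 1 1 (fun x _ _ => rfl) rfl rfl]
    unfold dd; omega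
  rw [Finset.sum_congr rfl h, sum_comb]
  rw [Finset.card_eq_sum_ones (F (n+1))]
  ring_nf

lemma recT (n : ℕ) : Tq (n+2) = 2 * Tq (n+1) + Sq (n+1) := by
  have h : ∀ u ∈ F (n+1),
      (∑ x ∈ Finset.Icc (st u).1 ((st u).2 + 1), dd (u ++ [x])) =
        0 * (dd u * 1) + 0 * 1 + 2 * dd u + 1 := by
    intro u hu
    obtain ⟨hune, he1, he2, he3, -⟩ := mem_F_facts hu
    rw [inner_eval _ _ he2 _ 0 (dd u) (dd u + 1)
      (fun x _ hx2 => by rw [dd_append, if_pos hx2])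
      (by rw [dd_append, if_neg (lt_irrefl _)]; rfl)
      (by rw [dd_append, if_neg (by omega)]; unfold dd; omega)]
    omega
  simp only [Tq, Sq]
  rw [sum_F n dd, Finset.sum_congr rfl h, sum_comb]
  ring_nf

lemma recA (n : ℕ) : Aq (n+2) = Apq (n+1) + 2 * Aq (n+1) + Sq (n+1) := by
  have h : ∀ u ∈ F (n+1),
      (∑ x ∈ Finset.Icc (st u).1 ((st u).2 + 1), asc (u ++ [x])) =
        1 * (dd u * asc u) + 2 * asc u + 0 * dd u + 1 := by
    intro u hu
    obtain ⟨hune, he1, he2, he3, -⟩ := mem_F_facts hu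
    rw [inner_eval _ _ he2 _ (asc u) (asc u) (asc u + 1)
      (fun x _ hx2 => by rw [asc_append _ _ hune he3, if_neg (by omega), add_zero])
      (by rw [asc_append _ _ hune he3, if_neg (lt_irrefl _), add_zero])
      (by rw [asc_append _ _ hune he3, if_pos (by omega)])]
    unfold dd
    generalize (st u).2 - (st u).1 = e
    ring
  simp only [Aq, Apq, Sq]
  rw [sum_F n asc, Finset.sum_congr rfl h, sum_comb]
  ring_nf

lemma recAp (n : ℕ) :
    Apq (n+2) = 2 * Apq (n+1) + Aq (n+1) + Tq (n+1) + Sq (n+1) := by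
  have h : ∀ u ∈ F (n+1),
      (∑ x ∈ Finset.Icc (st u).1 ((st u).2 + 1), dd (u ++ [x]) * asc (u ++ [x])) =
        2 * (dd u * asc u) + 1 * asc u + 1 * dd u + 1 := by
    intro u hu
    obtain ⟨hune, he1, he2, he3, -⟩ := mem_F_facts hu
    rw [inner_eval _ _ he2 _ 0 (dd u * asc u) ((dd u + 1) * (asc u + 1))
      (fun x _ hx2 => by rw [dd_append, if_pos hx2, zero_mul])
      (by rw [dd_append, if_neg (lt_irrefl _), asc_append _ _ hune he3,
            if_neg (lt_irrefl _), add_zero]; rfl)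
      (by rw [dd_append, if_neg (by omega), asc_append _ _ hune he3,
            if_pos (by omega)]; unfold dd; congr 1; omega)]
    unfold dd
    generalize (st u).2 - (st u).1 = e
    ring
  simp only [Apq, Aq, Tq, Sq]
  rw [sum_F n (fun w => dd w * asc w), Finset.sum_congr rfl h, sum_comb]
  ring_nf

lemma recD (n : ℕ) : Dq (n+2) = Dpq (n+1) + 2 * Dq (n+1) + Tq (n+1) := by
  have h : ∀ u ∈ F (n+1),
      (∑ x ∈ Finset.Icc (st u).1 ((st u).2 + 1), des (u ++ [x])) =
        1 * (dd u * des u) + 2 * des u + 1 * dd u + 0 := by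
    intro u hu
    obtain ⟨hune, he1, he2, he3, -⟩ := mem_F_facts hu
    rw [inner_eval _ _ he2 _ (des u + 1) (des u) (des u)
      (fun x _ hx2 => by rw [des_append _ _ hune he3, if_pos hx2])
      (by rw [des_append _ _ hune he3, if_neg (lt_irrefl _), add_zero])
      (by rw [des_append _ _ hune he3, if_neg (by omega), add_zero])]
    unfold dd
    generalize (st u).2 - (st u).1 = e
    ring
  simp only [Dq, Dpq, Tq]
  rw [sum_F n des, Finset.sum_congr rfl h, sum_comb]
  ring_nf

lemma recDp (n : ℕ) : Dpq (n+2) = 2 * Dpq (n+1) + Dq (n+1) := by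
  have h : ∀ u ∈ F (n+1),
      (∑ x ∈ Finset.Icc (st u).1 ((st u).2 + 1), dd (u ++ [x]) * des (u ++ [x])) =
        2 * (dd u * des u) + 1 * des u + 0 * dd u + 0 := by
    intro u hu
    obtain ⟨hune, he1, he2, he3, -⟩ := mem_F_facts hu
    rw [inner_eval _ _ he2 _ 0 (dd u * des u) ((dd u + 1) * des u)
      (fun x _ hx2 => by rw [dd_append, if_pos hx2, zero_mul])
      (by rw [dd_append, if_neg (lt_irrefl _), des_append _ _ hune he3,
            if_neg (lt_irrefl _), add_zero]; rfl)
      (by rw [dd_append, if_neg (by omega), des_append _ _ hune he3,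
            if_neg (by omega), add_zero]; unfold dd; congr 1; omega)]
    unfold dd
    generalize (st u).2 - (st u).1 = e
    ring
  simp only [Dpq, Dq]
  rw [sum_F n (fun w => dd w * des w), Finset.sum_congr rfl h, sum_comb]
  ring_nf

lemma recL (n : ℕ) : Lq (n+2) = Lpq (n+1) + 2 * Lq (n+1) + Sq (n+1) := by
  have h : ∀ u ∈ F (n+1),
      (∑ x ∈ Finset.Icc (st u).1 ((st u).2 + 1), lev (u ++ [x])) =
        1 * (dd u * lev u) + 2 * lev u + 0 * dd u + 1 := by
    intro u hu
    obtain ⟨hune, he1, he2, he3, -⟩ := mem_F_facts hu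
    rw [inner_eval _ _ he2 _ (lev u) (lev u + 1) (lev u)
      (fun x _ hx2 => by rw [lev_append _ _ hune he3, if_neg (by omega), add_zero])
      (by rw [lev_append _ _ hune he3, if_pos rfl])
      (by rw [lev_append _ _ hune he3, if_neg (by omega), add_zero])]
    unfold dd
    generalize (st u).2 - (st u).1 = e
    ring
  simp only [Lq, Lpq, Sq]
  rw [sum_F n lev, Finset.sum_congr rfl h, sum_comb]
  ring_nf

lemma recLp (n : ℕ) : Lpq (n+2) = 2 * Lpq (n+1) + Lq (n+1) + Tq (n+1) := by
  have h : ∀ u ∈ F (n+1),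
      (∑ x ∈ Finset.Icc (st u).1 ((st u).2 + 1), dd (u ++ [x]) * lev (u ++ [x])) =
        2 * (dd u * lev u) + 1 * lev u + 1 * dd u + 0 := by
    intro u hu
    obtain ⟨hune, he1, he2, he3, -⟩ := mem_F_facts hu
    rw [inner_eval _ _ he2 _ 0 (dd u * (lev u + 1)) ((dd u + 1) * lev u)
      (fun x _ hx2 => by rw [dd_append, if_pos hx2, zero_mul])
      (by rw [dd_append, if_neg (lt_irrefl _), lev_append _ _ hune he3,
            if_pos rfl]; rfl)
      (by rw [dd_append, if_neg (by omega), lev_append _ _ hune he3,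
            if_neg (by omega), add_zero]; unfold dd; congr 1; omega)]
    unfold dd
    generalize (st u).2 - (st u).1 = e
    ring
  simp only [Lpq, Lq, Tq]
  rw [sum_F n (fun w => dd w * lev w), Finset.sum_congr rfl h, sum_comb]
  ring_nf

theorem phi (m : ℕ) :
    2 * Sq (m+1) = 3^m + 1 ∧
    2 * Tq (m+1) + 1 = 3^m ∧
    4 * Aq (m+1) = m * (3^m + 1) ∧
    4 * Apq (m+1) + (m+1) = (m+1) * 3^m ∧
    12 * Dq (m+1) + 3*m = m * 3^m ∧
    12 * Dpq (m+1) + 4 * 3^m = (m+1) * 3^m + 3*(m+1) ∧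
    6 * Lq (m+1) = m * (3^m + 3) ∧
    6 * Lpq (m+1) + 3*m = m * 3^m := by
  induction m with
  | zero =>
    refine ⟨?_, ?_, ?_, ?_, ?_, ?_, ?_, ?_⟩ <;> decide
  | succ m ih =>
    obtain ⟨h1, h2, h3, h4, h5, h6, h7, h8⟩ := ih
    refine ⟨?_, ?_, ?_, ?_, ?_, ?_, ?_, ?_⟩
    · rw [show m+1+1 = m+2 from rfl, recS m, pow_succ]
      zify at h1 h2 ⊢
      linear_combination h2 + 2 * h1
    · rw [show m+1+1 = m+2 from rfl, recT m, pow_succ]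
      zify at h1 h2 ⊢
      linear_combination 2 * h2 + h1
    · rw [show m+1+1 = m+2 from rfl, recA m, pow_succ]
      zify at h1 h3 h4 ⊢
      linear_combination h4 + 2 * h3 + 2 * h1
    · rw [show m+1+1 = m+2 from rfl, recAp m, pow_succ]
      zify at h1 h2 h3 h4 ⊢
      linear_combination 2 * h4 + h3 + 2 * h2 + 2 * h1
    · rw [show m+1+1 = m+2 from rfl, recD m, pow_succ]
      zify at h2 h5 h6 ⊢
      linear_combination h6 + 2 * h5 + 6 * h2
    · rw [show m+1+1 = m+2 from rfl, recDp m, pow_succ]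
      zify at h5 h6 ⊢
      linear_combination 2 * h6 + h5
    · rw [show m+1+1 = m+2 from rfl, recL m, pow_succ]
      zify at h1 h7 h8 ⊢
      linear_combination h8 + 2 * h7 + 3 * h1
    · rw [show m+1+1 = m+2 from rfl, recLp m, pow_succ]
      zify at h2 h7 h8 ⊢
      linear_combination 2 * h8 + h7 + 3 * h2

lemma flatCat_eq (n : ℕ) : FlatCat n = ↑(F n) :=
  Set.ext fun w => (((inv n).1 w)).symm

lemma tot_eq_sum (n : ℕ) (τ : List ℕ) : tot n τ = ∑ w ∈ F n, numOcc τ w := by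
  rw [tot, flatCat_eq, finsum_mem_coe_finset]

lemma tot_12 (n : ℕ) : tot n [1, 2] = Aq n := by
  rw [tot_eq_sum]
  apply Finset.sum_congr rfl
  intro w _
  exact numOcc_eq_cnt (· < ·) _ _ (occAt_12 w)

lemma tot_21 (n : ℕ) : tot n [2, 1] = Dq n := by
  rw [tot_eq_sum]
  apply Finset.sum_congr rfl
  intro w _
  exact numOcc_eq_cnt (fun a b => b < a) _ _ (occAt_21 w)

lemma tot_11 (n : ℕ) : tot n [1, 1] = Lq n := by
  rw [tot_eq_sum]
  apply Finset.sum_congr rfl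
  intro w _
  exact numOcc_eq_cnt (· = ·) _ _ (occAt_11 w)

end FCP4

theorem aux_tot_length_two_patterns (n : ℕ) (hn : 1 ≤ n) :
    4 * tot n [1, 2] = (n - 1) * (3 ^ (n - 1) + 1) ∧
    4 * tot n [2, 1] = (n - 1) * (3 ^ (n - 2) - 1) ∧
    2 * tot n [1, 1] = (n - 1) * (3 ^ (n - 2) + 1) := by
  obtain ⟨m, rfl⟩ : ∃ m, n = m + 1 := ⟨n - 1, by omega⟩
  obtain ⟨p1, p2, p3, p4, p5, p6, p7, p8⟩ := FCP4.phi m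
  have hm1 : m + 1 - 1 = m := by omega
  rw [FCP4.tot_12, FCP4.tot_21, FCP4.tot_11, hm1]
  refine ⟨by omega, ?_, ?_⟩
  · -- 4 * Dq (m+1) = m * (3^(m+1-2) - 1)
    rcases Nat.eq_zero_or_pos m with rfl | hm
    · simp only [Nat.zero_mul, zero_mul]
      omega
    · obtain ⟨k, rfl⟩ : ∃ k, m = k + 1 := ⟨m - 1, by omega⟩
      rw [show k + 1 + 1 - 2 = k by omega]
      rw [show (3:ℕ)^(k+1) = 3 * 3^k by rw [pow_succ]; ring] at p5
      have hpow : (1:ℕ) ≤ 3^k := Nat.one_le_pow k 3 (by omega)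
      obtain ⟨t, ht⟩ := Nat.exists_eq_add_of_le hpow
      rw [ht, show (k+1) * (3 * (1 + t)) = 3 * ((k+1) * t) + 3 * (k+1) by ring] at p5
      rw [ht, show 1 + t - 1 = t by omega]
      generalize hc : (k+1) * t = c at p5 ⊢
      omega
  · -- 2 * Lq (m+1) = m * (3^(m+1-2) + 1)
    rcases Nat.eq_zero_or_pos m with rfl | hm
    · simp only [Nat.zero_mul, zero_mul]
      omega
    · obtain ⟨k, rfl⟩ : ∃ k, m = k + 1 := ⟨m - 1, by omega⟩
      rw [show k + 1 + 1 - 2 = k by omega]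
      rw [show (3:ℕ)^(k+1) = 3 * 3^k by rw [pow_succ]; ring] at p7
      rw [show (k+1) * (3 * 3^k + 3) = 3 * ((k+1) * (3^k + 1)) by ring] at p7
      generalize hc : (k+1) * (3^k + 1) = c at p7 ⊢
      omega


/-- For every `n ≥ 1`: `4·tot_n(12) = (n−1)(3^(n−1)+1)`,
`4·tot_n(21) = (n−1)(3^(n−2)−1)` and `2·tot_n(11) = (n−1)(3^(n−2)+1)`. -/
theorem tot_length_two_patterns (n : ℕ) (hn : 1 ≤ n) :
    4 * tot n [1, 2] = (n - 1) * (3 ^ (n - 1) + 1) ∧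
    4 * tot n [2, 1] = (n - 1) * (3 ^ (n - 2) - 1) ∧
    2 * tot n [1, 1] = (n - 1) * (3 ^ (n - 2) + 1) := by
  exact aux_tot_length_two_patterns n hn
end

section
/- For every integer n ≥ 2: tot_n(122) = tot_{n−1}(12), tot_n(211) = tot_{n−1}(21), and tot_n(111) = tot_{n−1}(11). -/
open scoped BigOperators

/-!
An occurrence of `abb` at position `i` of a flattened Catalan word ends in a repeated letter.
Deleting the second copy leaves an occurrence of `ab` at `i` in a flattened Catalan word one
letter shorter, and doubling the letter at `i + 1` undoes this. Doubling a letter keeps every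
Catalan step valid (the new step `x, x` is allowed because letters are positive) and creates no
new run start, so the run starts and their first letters are unchanged; hence the two sets of
marked words are in bijection.
-/

lemma IsCatalan.one_le_getD {w : List ℕ} (hw : IsCatalan w) {k : ℕ} (hk : k < w.length) :
    1 ≤ w.getD k 0 := by
  cases k with
  | zero => exact hw.2.1.ge
  | succ k => exact (hw.2.2 k hk).1

lemma IsCatalan.getD_le {w : List ℕ} (hw : IsCatalan w) (k : ℕ) : w.getD k 0 ≤ k + 1 := by
  induction k with
  | zero => exact hw.2.1.le
  | succ k ih =>
    by_cases hk : k + 1 < w.length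
    · have := (hw.2.2 k hk).2
      omega
    · rw [List.getD_eq_default _ _ (by omega)]
      omega

lemma isFlattened_iff_of_strictMono {u w : List ℕ} {ι : ℕ → ℕ} (hι : StrictMono ι)
    (hget : ∀ j, u.getD (ι j) 0 = w.getD j 0) (hrun : ∀ j, RunStart u (ι j) ↔ RunStart w j)
    (hrange : ∀ m, RunStart u m → m ∈ Set.range ι) :
    IsFlattened u ↔ IsFlattened w := by
  refine ⟨fun hu j j' hj hj' hjj' => ?_, fun hw m m' hm hm' hmm' => ?_⟩
  · rw [← hget, ← hget]
    exact hu _ _ ((hrun j).2 hj) ((hrun j').2 hj') (hι.monotone hjj')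
  · obtain ⟨j, rfl⟩ := hrange m hm
    obtain ⟨j', rfl⟩ := hrange m' hm'
    rw [hget, hget]
    exact hw _ _ ((hrun j).1 hm) ((hrun j').1 hm') (hι.le_iff_le.1 hmm')

def doubleAt (w : List ℕ) (k : ℕ) : List ℕ :=
  w.insertIdx (k + 1) (w.getD k 0)

section doubleAt

variable {w : List ℕ} {k j : ℕ}

lemma length_doubleAt (hk : k < w.length) : (doubleAt w k).length = w.length + 1 :=
  List.length_insertIdx_of_le_length hk _

lemma getD_doubleAt_of_le (hj : j ≤ k) : (doubleAt w k).getD j 0 = w.getD j 0 := by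
  simp only [doubleAt, List.getD_eq_getElem?_getD,
    List.getElem?_insertIdx_of_lt (by omega : j < k + 1)]

lemma getD_doubleAt_succ (hj : k ≤ j) : (doubleAt w k).getD (j + 1) 0 = w.getD j 0 := by
  rcases hj.eq_or_lt with rfl | hj
  · simp only [doubleAt, List.getD_eq_getElem?_getD, List.getElem?_insertIdx_self]
    split_ifs with h
    · rfl
    · simp [List.getElem?_eq_none (by omega : w.length ≤ k)]
  · simp only [doubleAt, List.getD_eq_getElem?_getD,
      List.getElem?_insertIdx_of_gt (by omega : k + 1 < j + 1), Nat.add_sub_cancel]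

lemma eraseIdx_doubleAt (w : List ℕ) (k : ℕ) : (doubleAt w k).eraseIdx (k + 1) = w :=
  List.eraseIdx_insertIdx_self _

lemma doubleAt_eraseIdx (hk : k + 1 < w.length) (h : w.getD (k + 1) 0 = w.getD k 0) :
    doubleAt (w.eraseIdx (k + 1)) k = w := by
  have hget : (w.eraseIdx (k + 1)).getD k 0 = w[k + 1] := by
    rw [List.getD_eq_getElem?_getD, List.getElem?_eraseIdx_of_lt (by omega),
      ← List.getD_eq_getElem?_getD, ← h, List.getD_eq_getElem _ _ hk]
  rw [doubleAt, hget, List.insertIdx_eraseIdx_getElem]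

lemma isCatalan_doubleAt_iff (hk : k < w.length) :
    IsCatalan (doubleAt w k) ↔ IsCatalan w := by
  have hlen := length_doubleAt hk
  have hne : doubleAt w k ≠ [] ∧ w ≠ [] :=
    ⟨List.ne_nil_of_length_pos (by omega), List.ne_nil_of_length_pos (by omega)⟩
  refine ⟨fun ⟨_, h0, hu⟩ => ⟨hne.2, ?_, fun i hi => ?_⟩,
    fun hw => ⟨hne.1, ?_, fun i hi => ?_⟩⟩
  · rwa [getD_doubleAt_of_le k.zero_le] at h0
  · rcases Nat.lt_or_ge i k with hik | hik
    · simpa only [getD_doubleAt_of_le hik, getD_doubleAt_of_le hik.le] using hu i (by omega)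
    · simpa only [getD_doubleAt_succ hik, getD_doubleAt_succ (hik.trans i.le_succ)]
        using hu (i + 1) (by omega)
  · rw [getD_doubleAt_of_le k.zero_le, hw.2.1]
  · rcases lt_trichotomy i k with hik | rfl | hik
    · simpa only [getD_doubleAt_of_le hik, getD_doubleAt_of_le hik.le] using hw.2.2 i (by omega)
    · rw [getD_doubleAt_succ le_rfl, getD_doubleAt_of_le le_rfl]
      exact ⟨hw.one_le_getD hk, by omega⟩
    · obtain ⟨m, rfl⟩ : ∃ m, i = m + 1 := ⟨i - 1, by omega⟩
      rw [getD_doubleAt_succ (by omega : k ≤ m + 1), getD_doubleAt_succ (by omega : k ≤ m)]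
      exact hw.2.2 m (by omega)

lemma isFlattened_doubleAt_iff (hk : k < w.length) :
    IsFlattened (doubleAt w k) ↔ IsFlattened w := by
  have hlen := length_doubleAt hk
  refine isFlattened_iff_of_strictMono (ι := fun j => if j ≤ k then j else j + 1)
    (strictMono_nat_of_lt_succ fun j => by split_ifs <;> omega) (fun j => ?_) (fun j => ?_) ?_
  · split_ifs with hj
    · exact getD_doubleAt_of_le hj
    · exact getD_doubleAt_succ (by omega)
  · simp only [RunStart, hlen]
    split_ifs with hj
    · rw [getD_doubleAt_of_le hj, getD_doubleAt_of_le (by omega : j - 1 ≤ k)]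
      omega
    · obtain ⟨m, rfl⟩ : ∃ m, j = m + 1 := ⟨j - 1, by omega⟩
      rw [Nat.add_sub_cancel, getD_doubleAt_succ (by omega : k ≤ m + 1),
        getD_doubleAt_succ (by omega : k ≤ m), Nat.add_sub_cancel]
      simp
  · rintro m ⟨hm, hm'⟩
    rcases lt_trichotomy m (k + 1) with hmk | rfl | hmk
    · exact ⟨m, if_pos (by omega)⟩
    · rw [getD_doubleAt_succ le_rfl, Nat.add_sub_cancel, getD_doubleAt_of_le le_rfl] at hm'
      omega
    · exact ⟨m - 1, by simp only; split_ifs <;> omega⟩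

lemma doubleAt_mem_flatCat_iff {n : ℕ} (hk : k < w.length) :
    doubleAt w k ∈ FlatCat (n + 1) ↔ w ∈ FlatCat n := by
  simp only [FlatCat, Set.mem_ofPred_eq, length_doubleAt hk, Nat.add_right_cancel_iff,
    isCatalan_doubleAt_iff hk, isFlattened_doubleAt_iff hk]

end doubleAt

lemma OccAt.getD_add_two {a b i : ℕ} {w : List ℕ} (h : OccAt [a, b, b] w i) :
    w.getD (i + 2) 0 = w.getD (i + 1) 0 := by
  have h12 := h.2 1 (by simp) 2 (by simp)
  have h21 := h.2 2 (by simp) 1 (by simp)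
  simp only [List.getD_cons_succ, List.getD_cons_zero, lt_irrefl, iff_false, not_lt] at h12 h21
  exact le_antisymm h12 h21

lemma occAt_doubleAt_iff {a b i : ℕ} {w : List ℕ} :
    OccAt [a, b, b] (doubleAt w (i + 1)) i ↔ OccAt [a, b] w i := by
  have hword : ∀ s < 3, (doubleAt w (i + 1)).getD (i + s) 0 = w.getD (i + min s 1) 0 := by
    intro s hs
    interval_cases s
    · exact getD_doubleAt_of_le (by omega)
    · exact getD_doubleAt_of_le le_rfl
    · exact getD_doubleAt_succ le_rfl
  have hpat : ∀ s < 3, [a, b, b].getD s 0 = [a, b].getD (min s 1) 0 := by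
    intro s hs
    interval_cases s <;> rfl
  have hlen : i + 3 ≤ (doubleAt w (i + 1)).length ↔ i + 2 ≤ w.length := by
    simp only [doubleAt, List.length_insertIdx]
    split_ifs <;> omega
  simp only [OccAt, List.length_cons, List.length_nil]
  refine and_congr hlen ⟨fun h s hs t ht => ?_, fun h s hs t ht => ?_⟩
  · have hst := h s (by omega) t (by omega)
    rwa [hword s (by omega), hword t (by omega), hpat s (by omega), hpat t (by omega),
      Nat.min_eq_left (by omega : s ≤ 1), Nat.min_eq_left (by omega : t ≤ 1)] at hst
  · rw [hword s hs, hword t ht, hpat s hs, hpat t ht]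
    exact h _ (by omega) _ (by omega)

lemma finite_flatCat (n : ℕ) : (FlatCat n).Finite := by
  refine ((List.finite_length_eq (Fin (n + 1)) n).image (List.map Fin.val)).subset ?_
  rintro w ⟨hlen, hw, -⟩
  have hlt : ∀ x ∈ w, x < n + 1 := by
    intro x hx
    obtain ⟨j, hj, rfl⟩ := List.getElem_of_mem hx
    have := hw.getD_le j
    rw [List.getD_eq_getElem _ _ hj] at this
    omega
  exact ⟨w.pmap Fin.mk hlt, by simpa using hlen, by simp [List.map_pmap]⟩

lemma finite_setOf_occAt (τ w : List ℕ) : {i | OccAt τ w i}.Finite :=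
  (Set.finite_Iic w.length).subset fun i hi => (Nat.le_add_right i _).trans hi.1

def flatCatOccurrences (n : ℕ) (τ : List ℕ) : Set (List ℕ × ℕ) :=
  {p | p.1 ∈ FlatCat n ∧ OccAt τ p.1 p.2}

lemma tot_eq_ncard (n : ℕ) (τ : List ℕ) : tot n τ = (flatCatOccurrences n τ).ncard := by
  have hunion : flatCatOccurrences n τ = ⋃ w ∈ FlatCat n, {w} ×ˢ {i | OccAt τ w i} := by
    ext ⟨w, i⟩
    simp [flatCatOccurrences]
  rw [hunion, Set.Finite.ncard_biUnion (finite_flatCat n)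
    (fun w _ => (Set.finite_singleton w).prod (finite_setOf_occAt τ w))
    (fun w _ w' _ hne => Set.disjoint_prod.2 (Or.inl (Set.disjoint_singleton.2 hne)))]
  simp [tot, numOcc, Set.ncard_prod]

theorem tot_succ_double_last (a b n : ℕ) : tot (n + 1) [a, b, b] = tot n [a, b] := by
  rw [tot_eq_ncard, tot_eq_ncard, eq_comm]
  refine Set.BijOn.ncard_eq (f := fun p => (doubleAt p.1 (p.2 + 1), p.2)) ⟨?_, ?_, ?_⟩
  · rintro ⟨w, i⟩ ⟨hw, hocc⟩
    have hi : i + 1 < w.length := hocc.1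
    exact ⟨(doubleAt_mem_flatCat_iff hi).2 hw, occAt_doubleAt_iff.2 hocc⟩
  · rintro ⟨w, i⟩ - ⟨w', i'⟩ - h
    obtain ⟨hw, rfl⟩ := Prod.mk.inj h
    rw [← eraseIdx_doubleAt w (i + 1), hw, eraseIdx_doubleAt]
  · rintro ⟨w, i⟩ ⟨hw, hocc⟩
    have hi : i + 2 < w.length := hocc.1
    have hdbl : doubleAt (w.eraseIdx (i + 2)) (i + 1) = w :=
      doubleAt_eraseIdx hi hocc.getD_add_two
    have hi' : i + 1 < (w.eraseIdx (i + 2)).length := by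
      rw [List.length_eraseIdx_of_lt hi]
      omega
    refine ⟨(w.eraseIdx (i + 2), i), ⟨?_, ?_⟩, by simp only [hdbl]⟩
    · rw [← doubleAt_mem_flatCat_iff hi', hdbl]
      exact hw
    · rw [← occAt_doubleAt_iff, hdbl]
      exact hocc

/-- For every `n ≥ 2`: `tot_n(122) = tot_{n−1}(12)`, `tot_n(211) = tot_{n−1}(21)`
and `tot_n(111) = tot_{n−1}(11)`. -/
theorem tot_length_three_shift (n : ℕ) (hn : 2 ≤ n) :
    tot n [1, 2, 2] = tot (n - 1) [1, 2] ∧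
    tot n [2, 1, 1] = tot (n - 1) [2, 1] ∧
    tot n [1, 1, 1] = tot (n - 1) [1, 1] := by
  obtain ⟨m, rfl⟩ : ∃ m, n = m + 1 := ⟨n - 1, by omega⟩
  exact ⟨tot_succ_double_last 1 2 m, tot_succ_double_last 2 1 m, tot_succ_double_last 1 1 m⟩
end

section
/- For every integer n ≥ 1, the number of flattened Catalan words of length n avoiding the consecutive pattern 122 is f_n(122) = Σ_{r=0}^{⌊(n−1)/2⌋} C(n+r, 3r+1). -/
/-!
Rises in a Catalan word are at most one, so a weakly increasing run avoiding `122` is a plateau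
followed by a staircase, `m^(u+1) (m+1) ⋯ (m+T)`, and flattenedness says that the next run starts
at some `m + d` with `d < T`. Writing `T = d + 1 + s`, a word with `r` descents is encoded by
`3r + 2` unconstrained parameters `u₀, d₀, s₀, …, u_r, T_r` summing to `n - 2r - 1`, and
stars and bars counts these codes by `C(n + r, 3r + 1)`.
-/

open scoped BigOperators

namespace List

variable {α : Type*}

theorem getD_drop (l : List α) (d : α) (k i : ℕ) : (l.drop k).getD i d = l.getD (k + i) d := by
  simp [getD_eq_getElem?_getD, getElem?_drop]

theorem getD_mem {l : List α} (d : α) {i : ℕ} (h : i < l.length) : l.getD i d ∈ l := by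
  rw [getD_eq_getElem _ _ h]
  exact getElem_mem h

theorem ext_getD {l l' : List α} (d : α) (hlen : l.length = l'.length)
    (h : ∀ i < l.length, l.getD i d = l'.getD i d) : l = l' :=
  ext_getElem hlen fun i hi hi' => by
    simpa only [getD_eq_getElem _ _ hi, getD_eq_getElem _ _ hi'] using h i hi

end List

section Words

variable {w x : List ℕ} {m u t i k : ℕ}

def RisesAtMostOne (w : List ℕ) : Prop :=
  ∀ i, i + 1 < w.length → w.getD (i + 1) 0 ≤ w.getD i 0 + 1

def Avoids122 (w : List ℕ) : Prop :=
  ∀ i, i + 2 < w.length →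
    w.getD i 0 < w.getD (i + 1) 0 → w.getD (i + 1) 0 ≠ w.getD (i + 2) 0

theorem RisesAtMostOne.drop (hw : RisesAtMostOne w) (k : ℕ) : RisesAtMostOne (w.drop k) := by
  intro i hi
  simp only [List.length_drop, List.getD_drop] at hi ⊢
  exact hw (k + i) (by omega)

theorem Avoids122.drop (hw : Avoids122 w) (k : ℕ) : Avoids122 (w.drop k) := by
  intro i hi
  simp only [List.length_drop, List.getD_drop] at hi ⊢
  exact hw (k + i) (by omega)

theorem RunStart.drop (hk : RunStart w k) (hi : RunStart (w.drop k) i) : RunStart w (k + i) := by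
  obtain ⟨hlen, rfl | hdesc⟩ := hi
  · exact hk
  rcases Nat.eq_zero_or_pos i with rfl | hi0
  · exact hk
  simp only [List.length_drop, List.getD_drop] at hlen hdesc
  exact ⟨by omega, Or.inr (by rwa [show k + (i - 1) = k + i - 1 by omega] at hdesc)⟩

theorem IsFlattened.drop (hw : IsFlattened w) (hk : RunStart w k) : IsFlattened (w.drop k) := by
  intro i j hi hj hij
  simpa only [List.getD_drop] using hw _ _ (hk.drop hi) (hk.drop hj) (by omega)

def runWord (m u t : ℕ) : List ℕ :=
  List.replicate (u + 1) m ++ (List.range t).map (m + 1 + ·)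

@[simp]
theorem length_runWord : (runWord m u t).length = u + 1 + t := by
  simp [runWord]

theorem le_of_mem_runWord {a : ℕ} (h : a ∈ runWord m u t) : m ≤ a := by
  simp only [runWord, List.mem_append, List.mem_replicate, List.mem_map, List.mem_range] at h
  omega

theorem getD_runWord_append_of_lt (h : i < u + 1 + t) :
    (runWord m u t ++ x).getD i 0 = m + (i - u) := by
  rw [List.getD_append _ _ _ _ (by simpa using h), runWord]
  rcases lt_or_ge i (u + 1) with hi | hi
  · rw [List.getD_append _ _ _ _ (by simpa using hi), List.getD_replicate _ hi]
    omega
  · rw [List.getD_append_right _ _ _ _ (by simpa using hi),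
      List.getD_eq_getElem _ _ (by
        rw [List.length_map, List.length_range, List.length_replicate]; omega)]
    simp only [List.length_replicate, List.getElem_map, List.getElem_range]
    omega

theorem getD_runWord_append_of_le (h : u + 1 + t ≤ i) :
    (runWord m u t ++ x).getD i 0 = x.getD (i - (u + 1 + t)) 0 := by
  rw [List.getD_append_right _ _ _ _ (by simpa using h), length_runWord]

theorem RisesAtMostOne.runWord_append (hx : RisesAtMostOne x) (hhead : x.getD 0 0 ≤ m + t + 1) :
    RisesAtMostOne (runWord m u t ++ x) := by
  intro i hi
  rw [List.length_append, length_runWord] at hi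
  obtain h | h | h : i + 1 < u + 1 + t ∨ i + 1 = u + 1 + t ∨ u + 1 + t ≤ i := by omega
  · rw [getD_runWord_append_of_lt h, getD_runWord_append_of_lt (by omega)]
    omega
  · rw [getD_runWord_append_of_lt (i := i) (by omega), getD_runWord_append_of_le h.ge, ← h,
      Nat.sub_self]
    omega
  · rw [getD_runWord_append_of_le h, getD_runWord_append_of_le (by omega),
      show i + 1 - (u + 1 + t) = i - (u + 1 + t) + 1 by omega]
    exact hx _ (by omega)

theorem Avoids122.runWord_append (hx : Avoids122 x) (hhead : x ≠ [] → x.getD 0 0 < m + t) :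
    Avoids122 (runWord m u t ++ x) := by
  intro i hi
  rw [List.length_append, length_runWord] at hi
  have hx0 : u + 1 + t < i + 3 → x.getD 0 0 < m + t := fun _ =>
    hhead (List.ne_nil_of_length_pos (by omega))
  obtain h | h | h | h :
      i + 2 < u + 1 + t ∨ i + 2 = u + 1 + t ∨ i + 1 = u + 1 + t ∨ u + 1 + t ≤ i := by omega
  · rw [getD_runWord_append_of_lt (by omega), getD_runWord_append_of_lt (by omega),
      getD_runWord_append_of_lt h]
    omega
  · rw [getD_runWord_append_of_lt (by omega), getD_runWord_append_of_lt (by omega),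
      getD_runWord_append_of_le h.ge, ← h, Nat.sub_self]
    have := hx0 (by omega)
    omega
  · rw [getD_runWord_append_of_lt (by omega), getD_runWord_append_of_le h.ge, ← h, Nat.sub_self]
    have := hx0 (by omega)
    omega
  · rw [getD_runWord_append_of_le h, getD_runWord_append_of_le (by omega),
      getD_runWord_append_of_le (by omega), show i + 1 - (u + 1 + t) = i - (u + 1 + t) + 1 by omega,
      show i + 2 - (u + 1 + t) = i - (u + 1 + t) + 2 by omega]
    exact hx _ (by omega)

theorem runStart_runWord_append (h : RunStart (runWord m u t ++ x) i) :
    i = 0 ∨ u + 1 + t ≤ i ∧ RunStart x (i - (u + 1 + t)) := by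
  obtain ⟨hlen, h0 | hdesc⟩ := h
  · exact Or.inl h0
  rw [List.length_append, length_runWord] at hlen
  rcases lt_or_ge i (u + 1 + t) with hi | hi
  · rw [getD_runWord_append_of_lt hi, getD_runWord_append_of_lt (by omega)] at hdesc
    omega
  refine Or.inr ⟨hi, by omega, ?_⟩
  rcases hi.eq_or_lt with rfl | hi
  · exact Or.inl (Nat.sub_self _)
  rw [getD_runWord_append_of_le hi.le, getD_runWord_append_of_le (by omega),
    show i - 1 - (u + 1 + t) = i - (u + 1 + t) - 1 by omega] at hdesc
  exact Or.inr hdesc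

theorem IsFlattened.runWord_append (hx : IsFlattened x) (hm : ∀ a ∈ x, m ≤ a) :
    IsFlattened (runWord m u t ++ x) := by
  intro i j hi hj hij
  rcases runStart_runWord_append hj with rfl | ⟨hjA, hj'⟩
  · rw [Nat.le_zero.1 hij]
  rcases runStart_runWord_append hi with rfl | ⟨hiA, hi'⟩
  · rw [getD_runWord_append_of_lt (by omega), Nat.zero_sub, add_zero]
    have := List.getD_mem 0 hj.1
    simp only [List.mem_append] at this
    rcases this with h | h
    · exact le_of_mem_runWord h
    · exact hm _ h
  rw [getD_runWord_append_of_le hiA, getD_runWord_append_of_le hjA]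
  exact hx _ _ hi' hj' (by omega)

end Words

section Codes

variable {m : ℕ} {P : List ℕ}

/-- Splitting the height of a non-final run as `d + 1 + s`, where `m + d` is where the next run
starts, makes the entries of a code independent parameters. -/
def codeWord : ℕ → List ℕ → List ℕ
  | m, [u, t] => runWord m u t
  | m, u :: d :: s :: P => runWord m u (d + 1 + s) ++ codeWord (m + d) P
  | _, _ => []

def IsCode (P : List ℕ) : Prop :=
  P.length % 3 = 2

theorem codeWord_pair (m u t : ℕ) : codeWord m [u, t] = runWord m u t := rfl

theorem codeWord_cons (m u d s : ℕ) (P : List ℕ) :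
    codeWord m (u :: d :: s :: P) = runWord m u (d + 1 + s) ++ codeWord (m + d) P := by
  cases P <;> rfl

theorem isCode_cons_iff {u d s : ℕ} : IsCode (u :: d :: s :: P) ↔ IsCode P := by
  simp only [IsCode, List.length_cons]
  omega

@[elab_as_elim]
theorem IsCode.induction {motive : ℕ → ∀ P : List ℕ, IsCode P → Prop}
    (pair : ∀ m u t h, motive m [u, t] h)
    (cons : ∀ m u d s P (hP : IsCode P) h,
      motive (m + d) P hP → motive m (u :: d :: s :: P) h) :
    ∀ m P h, motive m P h
  | _, [], h | _, [_], h => by simp [IsCode] at h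
  | m, [u, t], h => pair m u t h
  | m, u :: d :: s :: P, h =>
    cons m u d s P _ h (IsCode.induction pair cons (m + d) P (isCode_cons_iff.1 h))

theorem getD_codeWord_zero (hP : IsCode P) : (codeWord m P).getD 0 0 = m := by
  induction m, P, hP using IsCode.induction with
  | pair m u t _ =>
    simp [codeWord_pair, runWord]
  | cons m u d s P _ _ _ =>
    rw [codeWord_cons, getD_runWord_append_of_lt (by omega)]
    omega

theorem length_codeWord (hP : IsCode P) :
    (codeWord m P).length = P.sum + 2 * (P.length / 3) + 1 := by
  induction m, P, hP using IsCode.induction with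
  | pair m u t _ =>
    simp only [codeWord_pair, length_runWord, List.sum_cons, List.sum_nil, List.length_cons,
      List.length_nil]
    omega
  | cons m u d s P _ _ ih =>
    simp only [codeWord_cons, List.length_append, length_runWord, ih, List.sum_cons,
      List.length_cons]
    omega

theorem getD_codeWord_zero_lt (hP : IsCode P) {d s : ℕ} :
    codeWord (m + d) P ≠ [] → (codeWord (m + d) P).getD 0 0 < m + (d + 1 + s) := fun _ => by
  rw [getD_codeWord_zero hP]
  omega

theorem codeWord_ne_nil (hP : IsCode P) : codeWord m P ≠ [] := by
  apply List.ne_nil_of_length_pos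
  rw [length_codeWord hP]
  omega

theorem le_of_mem_codeWord (hP : IsCode P) {a : ℕ} (ha : a ∈ codeWord m P) :
    m ≤ a := by
  induction m, P, hP using IsCode.induction generalizing a with
  | pair m u t _ => exact le_of_mem_runWord ha
  | cons m u d s P _ _ ih =>
    rw [codeWord_cons, List.mem_append] at ha
    rcases ha with ha | ha
    · exact le_of_mem_runWord ha
    · exact (Nat.le_add_right m d).trans (ih ha)

theorem risesAtMostOne_codeWord (hP : IsCode P) : RisesAtMostOne (codeWord m P) := by
  induction m, P, hP using IsCode.induction with
  | pair m u t _ =>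
    rw [codeWord_pair, ← List.append_nil (runWord m u t)]
    exact RisesAtMostOne.runWord_append (fun i hi => by simp at hi) (by simp)
  | cons m u d s P hP _ ih =>
    rw [codeWord_cons]
    exact ih.runWord_append (by rw [getD_codeWord_zero hP]; omega)

theorem avoids122_codeWord (hP : IsCode P) : Avoids122 (codeWord m P) := by
  induction m, P, hP using IsCode.induction with
  | pair m u t _ =>
    rw [codeWord_pair, ← List.append_nil (runWord m u t)]
    exact Avoids122.runWord_append (fun i hi => by simp at hi) (by simp)
  | cons m u d s P hP _ ih =>
    rw [codeWord_cons]
    exact ih.runWord_append (getD_codeWord_zero_lt hP)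

theorem isFlattened_codeWord (hP : IsCode P) : IsFlattened (codeWord m P) := by
  induction m, P, hP using IsCode.induction with
  | pair m u t _ =>
    rw [codeWord_pair, ← List.append_nil (runWord m u t)]
    exact IsFlattened.runWord_append (fun i _ hi => by simp [RunStart] at hi) (by simp)
  | cons m u d s P hP _ ih =>
    rw [codeWord_cons]
    exact ih.runWord_append fun a ha => (Nat.le_add_right m d).trans (le_of_mem_codeWord hP ha)

end Codes

section Injective

variable {x y : List ℕ} {m u t u' t' : ℕ}

theorem getD_runWord_append_succ_ne (hx : x ≠ [] → x.getD 0 0 < m + t)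
    (h : u + 1 < (runWord m u t ++ x).length) : (runWord m u t ++ x).getD (u + 1) 0 ≠ m := by
  rw [List.length_append, length_runWord] at h
  rcases Nat.eq_zero_or_pos t with rfl | ht
  · rw [getD_runWord_append_of_le le_rfl, Nat.sub_self]
    have := hx (List.ne_nil_of_length_pos (by omega))
    omega
  · rw [getD_runWord_append_of_lt (by omega)]
    omega

theorem runWord_append_eq_le (h : runWord m u t ++ x = runWord m u' t' ++ y)
    (hx : x ≠ [] → x.getD 0 0 < m + t) : u' ≤ u ∧ (u = u' → t' ≤ t) := by
  have hlen := congrArg List.length h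
  simp only [List.length_append, length_runWord] at hlen
  refine ⟨not_lt.1 fun hu => getD_runWord_append_succ_ne (u := u) hx ?_ ?_, ?_⟩
  · rw [List.length_append, length_runWord]
    omega
  · rw [h, getD_runWord_append_of_lt (by omega)]
    omega
  rintro rfl
  by_contra! ht
  have hA := congrArg (List.getD · (u + 1 + t) 0) h
  simp only [getD_runWord_append_of_le le_rfl, Nat.sub_self] at hA
  rw [getD_runWord_append_of_lt (by omega)] at hA
  have := hx (List.ne_nil_of_length_pos (by omega))
  omega

theorem runWord_append_inj (h : runWord m u t ++ x = runWord m u' t' ++ y)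
    (hx : x ≠ [] → x.getD 0 0 < m + t) (hy : y ≠ [] → y.getD 0 0 < m + t') :
    u = u' ∧ t = t' ∧ x = y := by
  obtain ⟨hu', ht'⟩ := runWord_append_eq_le h hx
  obtain ⟨hu, ht⟩ := runWord_append_eq_le h.symm hy
  obtain rfl : u = u' := le_antisymm hu hu'
  obtain rfl : t = t' := le_antisymm (ht rfl) (ht' rfl)
  exact ⟨rfl, rfl, List.append_cancel_left h⟩

theorem codeWord_inj : ∀ {m : ℕ} {P Q : List ℕ}, IsCode P → IsCode Q →
    codeWord m P = codeWord m Q → P = Q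
  | _, [], _, hP, _, _ | _, [_], _, hP, _, _ => by simp [IsCode] at hP
  | _, _ :: _ :: _, [], _, hQ, _ | _, _ :: _ :: _, [_], _, hQ, _ => by simp [IsCode] at hQ
  | _, [u, t], [u', t'], _, _, h => by
    obtain ⟨rfl, rfl, -⟩ := runWord_append_inj (x := []) (y := [])
      (by simpa [codeWord_pair] using h) (by simp) (by simp)
    rfl
  | m, [u, t], u' :: d' :: s' :: Q, _, hQ, h => by
    rw [codeWord_pair, codeWord_cons] at h
    replace hQ := isCode_cons_iff.1 hQ
    exact absurd (runWord_append_inj (x := []) (by simpa using h) (by simp)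
      (getD_codeWord_zero_lt hQ)).2.2.symm (codeWord_ne_nil hQ)
  | m, u :: d :: s :: P, [u', t'], hP, _, h => by
    rw [codeWord_pair, codeWord_cons] at h
    replace hP := isCode_cons_iff.1 hP
    exact absurd (runWord_append_inj (y := []) (by simpa using h) (getD_codeWord_zero_lt hP)
      (by simp)).2.2 (codeWord_ne_nil hP)
  | m, u :: d :: s :: P, u' :: d' :: s' :: Q, hP, hQ, h => by
    rw [codeWord_cons, codeWord_cons] at h
    replace hP := isCode_cons_iff.1 hP
    replace hQ := isCode_cons_iff.1 hQ
    obtain ⟨rfl, hT, hPQ⟩ :=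
      runWord_append_inj h (getD_codeWord_zero_lt hP) (getD_codeWord_zero_lt hQ)
    have hd := congrArg (List.getD · 0 0) hPQ
    simp only [getD_codeWord_zero hP, getD_codeWord_zero hQ] at hd
    obtain rfl : d = d' := by omega
    obtain rfl : s = s' := by omega
    rw [codeWord_inj hP hQ hPQ]

end Injective

theorem exists_run_of_monotone_prefix {w : List ℕ} (hr : RisesAtMostOne w) (ha : Avoids122 w) :
    ∀ p < w.length, (∀ i < p, w.getD i 0 ≤ w.getD (i + 1) 0) →
      ∃ u ≤ p, ∀ i ≤ p, w.getD i 0 = w.getD 0 0 + (i - u)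
  | 0, _, _ => ⟨0, le_rfl, fun i hi => by rw [Nat.le_zero.1 hi]; rfl⟩
  | p + 1, hp, hmono => by
    obtain ⟨u, hu, hval⟩ :=
      exists_run_of_monotone_prefix hr ha p (by omega) fun i hi => hmono i (by omega)
    have hstep := hr p hp
    rcases (hmono p (by omega)).eq_or_lt with heq | hlt
    · -- a plateau right after a rise would be an occurrence of `122`
      have hup : u = p := by
        by_contra hne
        obtain ⟨q, rfl⟩ : ∃ q, p = q + 1 := ⟨p - 1, by omega⟩
        exact ha q (by omega) (by rw [hval q (by omega), hval (q + 1) le_rfl]; omega) heq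
      subst hup
      refine ⟨u + 1, le_rfl, fun i hi => ?_⟩
      rcases hi.lt_or_eq with hi | rfl
      · rw [hval i (by omega)]
        omega
      · rw [← heq, hval u le_rfl]
        omega
    · refine ⟨u, by omega, fun i hi => ?_⟩
      rcases hi.lt_or_eq with hi | rfl
      · exact hval i (by omega)
      · rw [hval p le_rfl] at hstep hlt
        omega

theorem exists_eq_runWord_append {w : List ℕ} (hne : w ≠ []) (hr : RisesAtMostOne w)
    (ha : Avoids122 w) :
    ∃ u t, w = runWord (w.getD 0 0) u t ++ w.drop (u + 1 + t) ∧
      (w.drop (u + 1 + t) ≠ [] → (w.drop (u + 1 + t)).getD 0 0 < w.getD 0 0 + t) := by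
  classical
  have hend : ∃ p, p + 1 = w.length ∨ p + 1 < w.length ∧ w.getD (p + 1) 0 < w.getD p 0 :=
    ⟨w.length - 1, Or.inl (by have := List.length_pos_iff.2 hne; omega)⟩
  obtain ⟨p, hp, hmono⟩ : ∃ p, (p + 1 = w.length ∨ p + 1 < w.length ∧
      w.getD (p + 1) 0 < w.getD p 0) ∧ ∀ i < p, w.getD i 0 ≤ w.getD (i + 1) 0 := by
    refine ⟨Nat.find hend, Nat.find_spec hend, fun i hi => ?_⟩
    have hnot := Nat.find_min hend hi
    have hspec := Nat.find_spec hend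
    push Not at hnot
    exact hnot.2 (by omega)
  obtain ⟨u, hu, hval⟩ := exists_run_of_monotone_prefix hr ha p (by omega) hmono
  refine ⟨u, p - u, ?_, fun hx => ?_⟩
  · refine List.ext_getD 0 ?_ fun i hi => ?_
    · rw [List.length_append, length_runWord, List.length_drop]
      omega
    rcases lt_or_ge i (p + 1) with hi' | hi'
    · rw [getD_runWord_append_of_lt (by omega), hval i (by omega)]
    · rw [getD_runWord_append_of_le (by omega), List.getD_drop]
      congr 1
      omega
  · rw [show u + 1 + (p - u) = p + 1 by omega] at hx ⊢
    rw [List.getD_drop, add_zero]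
    rw [ne_eq, List.drop_eq_nil_iff, not_le] at hx
    have := hval p le_rfl
    omega

theorem exists_codeWord_eq {w : List ℕ} (hne : w ≠ []) (hr : RisesAtMostOne w)
    (ha : Avoids122 w) (hf : IsFlattened w) : ∃ P, IsCode P ∧ codeWord (w.getD 0 0) P = w := by
  have hlen : 0 < w.length := List.length_pos_iff.2 hne
  obtain ⟨u, t, hw, hhead⟩ := exists_eq_runWord_append hne hr ha
  set m := w.getD 0 0
  set x := w.drop (u + 1 + t) with hx
  by_cases hx0 : x = []
  · refine ⟨[u, t], rfl, ?_⟩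
    rw [hx0, List.append_nil] at hw
    exact hw.symm
  have hxlen : u + 1 + t < w.length := by
    rwa [hx, List.drop_eq_nil_iff, not_le] at hx0
  have hxm : x.getD 0 0 < m + t := hhead hx0
  have hstart : RunStart w (u + 1 + t) := by
    refine ⟨hxlen, Or.inr ?_⟩
    rw [hw, getD_runWord_append_of_le le_rfl, getD_runWord_append_of_lt (by omega), Nat.sub_self]
    omega
  have hmx : m ≤ x.getD 0 0 := by
    rw [hx, List.getD_drop, add_zero]
    exact hf 0 (u + 1 + t) ⟨hlen, Or.inl rfl⟩ hstart (Nat.zero_le _)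
  obtain ⟨P, hP, hPx⟩ := exists_codeWord_eq hx0 (hr.drop _) (ha.drop _) (hf.drop hstart)
  refine ⟨u :: (x.getD 0 0 - m) :: (t - 1 - (x.getD 0 0 - m)) :: P, isCode_cons_iff.2 hP, ?_⟩
  rw [codeWord_cons, Nat.add_sub_cancel' hmx, hPx, show _ + 1 + _ = t by omega]
  exact hw.symm
termination_by w.length
decreasing_by simp only [List.length_drop]; omega

theorem occAt_122_iff {w : List ℕ} {i : ℕ} : OccAt [1, 2, 2] w i ↔
    i + 3 ≤ w.length ∧ w.getD i 0 < w.getD (i + 1) 0 ∧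
      w.getD (i + 1) 0 = w.getD (i + 2) 0 := by
  simp only [OccAt, List.length_cons, List.length_nil]
  refine and_congr_right fun _ => ⟨fun h => ?_, fun ⟨h01, h12⟩ s hs t ht => ?_⟩
  · have h01 := h 0 (by omega) 1 (by omega)
    have h12 := h 1 (by omega) 2 (by omega)
    have h21 := h 2 (by omega) 1 (by omega)
    simp +decide only [add_zero, iff_true, iff_false, not_lt] at h01 h12 h21
    omega
  · interval_cases s <;> interval_cases t <;>
      simp +decide only [add_zero, iff_true, iff_false, not_lt] <;> omega

theorem numOcc_122_eq_zero_iff {w : List ℕ} : numOcc [1, 2, 2] w = 0 ↔ Avoids122 w := by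
  have hfin : {i | OccAt [1, 2, 2] w i}.Finite :=
    (Set.finite_Iio w.length).subset fun i hi => by
      have := (occAt_122_iff.1 hi).1
      simp only [Set.mem_Iio]
      omega
  rw [numOcc, Set.ncard_eq_zero hfin, Set.eq_empty_iff_forall_notMem]
  simp only [Set.mem_ofPred_eq, occAt_122_iff, Avoids122]
  exact ⟨fun h i hi hlt heq => h i ⟨by omega, hlt, heq⟩,
    fun h i ⟨hi, hlt, heq⟩ => h i (by omega) hlt heq⟩

theorem isCatalan_isFlattened_avoids122_iff {w : List ℕ} :
    IsCatalan w ∧ IsFlattened w ∧ Avoids122 w ↔ ∃ P, IsCode P ∧ codeWord 1 P = w := by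
  constructor
  · rintro ⟨⟨hne, h0, hsteps⟩, hf, ha⟩
    rw [← h0]
    exact exists_codeWord_eq hne (fun i hi => (hsteps i hi).2) ha hf
  · rintro ⟨P, hP, rfl⟩
    exact ⟨⟨codeWord_ne_nil hP, getD_codeWord_zero hP, fun i hi =>
      ⟨le_of_mem_codeWord hP (List.getD_mem 0 hi), risesAtMostOne_codeWord hP i hi⟩⟩,
      isFlattened_codeWord hP, avoids122_codeWord hP⟩

open Finset

def weakCompositions (k s : ℕ) : Finset (List ℕ) :=
  (Nat.antidiagonalTuple k s).map ⟨List.ofFn, List.ofFn_injective⟩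

theorem mem_weakCompositions {k s : ℕ} {P : List ℕ} :
    P ∈ weakCompositions k s ↔ P.length = k ∧ P.sum = s := by
  simp only [weakCompositions, mem_map, Nat.mem_antidiagonalTuple, Function.Embedding.coeFn_mk]
  constructor
  · rintro ⟨f, hf, rfl⟩
    exact ⟨List.length_ofFn, by rw [List.sum_ofFn, hf]⟩
  · rintro ⟨rfl, rfl⟩
    exact ⟨fun i : Fin P.length => P[(i : ℕ)], by rw [← List.sum_ofFn, List.ofFn_getElem],
      List.ofFn_getElem⟩

theorem card_weakCompositions (k s : ℕ) : #(weakCompositions k s) = (k + s - 1).choose s := by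
  rw [weakCompositions, card_map, card_eq_of_equiv_fintype
    ((Equiv.subtypeEquivRight fun _ => Nat.mem_antidiagonalTuple).trans
      (Sym.equivNatSumOfFintype (Fin k) s).symm), Sym.card_sym_eq_choose, Fintype.card_fin]

def codesOfLength (n : ℕ) : Finset (List ℕ) :=
  (range ((n - 1) / 2 + 1)).biUnion fun r => weakCompositions (3 * r + 2) (n - (2 * r + 1))

theorem mem_codesOfLength {n : ℕ} (hn : 1 ≤ n) {P : List ℕ} :
    P ∈ codesOfLength n ↔ IsCode P ∧ (codeWord 1 P).length = n := by
  simp only [codesOfLength, mem_biUnion, mem_range, mem_weakCompositions]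
  constructor
  · rintro ⟨r, hr, hlen, hsum⟩
    have hP : IsCode P := by rw [IsCode, hlen]; omega
    refine ⟨hP, ?_⟩
    rw [length_codeWord hP, hlen, hsum]
    omega
  · rintro ⟨hP, hlen⟩
    rw [length_codeWord hP] at hlen
    refine ⟨P.length / 3, by omega, by rw [IsCode] at hP; omega, by omega⟩

theorem card_codesOfLength {n : ℕ} (hn : 1 ≤ n) :
    #(codesOfLength n) = ∑ r ∈ range ((n - 1) / 2 + 1), (n + r).choose (3 * r + 1) := by
  rw [codesOfLength, card_biUnion]
  · refine sum_congr rfl fun r hr => ?_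
    rw [mem_range] at hr
    rw [card_weakCompositions, show 3 * r + 2 + (n - (2 * r + 1)) - 1 = n + r by omega]
    exact Nat.choose_symm_of_eq_add (by omega)
  · intro r _ r' _ hrr'
    simp only [Function.onFun, disjoint_left, mem_weakCompositions]
    rintro P ⟨hP, -⟩ ⟨hP', -⟩
    omega

/-- For every `n ≥ 1`, the number of flattened Catalan words of length `n`
avoiding the consecutive pattern `122` is `Σ_{r=0}^{⌊(n−1)/2⌋} C(n+r, 3r+1)`. -/
theorem avoid_122 (n : ℕ) (hn : 1 ≤ n) :
    {w ∈ FlatCat n | numOcc [1, 2, 2] w = 0}.ncard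
      = ∑ r ∈ Finset.range ((n - 1) / 2 + 1), Nat.choose (n + r) (3 * r + 1) := by
  have hset :
      {w ∈ FlatCat n | numOcc [1, 2, 2] w = 0} = (codesOfLength n).image (codeWord 1) := by
    ext w
    simp only [FlatCat, numOcc_122_eq_zero_iff, Set.mem_ofPred_eq, coe_image, Set.mem_image,
      mem_coe, mem_codesOfLength hn]
    constructor
    · rintro ⟨⟨hlen, hc, hf⟩, ha⟩
      obtain ⟨P, hP, rfl⟩ := isCatalan_isFlattened_avoids122_iff.1 ⟨hc, hf, ha⟩
      exact ⟨P, ⟨hP, hlen⟩, rfl⟩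
    · rintro ⟨P, ⟨hP, hlen⟩, rfl⟩
      obtain ⟨hc, hf, ha⟩ := isCatalan_isFlattened_avoids122_iff.2 ⟨P, hP, rfl⟩
      exact ⟨⟨hlen, hc, hf⟩, ha⟩
  rw [hset, Set.ncard_coe_finset, card_image_of_injOn, card_codesOfLength hn]
  intro P hP Q hQ
  exact codeWord_inj ((mem_codesOfLength hn).1 hP).1 ((mem_codesOfLength hn).1 hQ).1
end

section
/- For every integer n ≥ 3, the number of flattened Catalan words of length n avoiding the consecutive pattern 111 is f_n(111) = Σ_{k=0}^{⌊n/2⌋} C(n−k, k)·2^(n−k−2). -/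
open scoped BigOperators

/-! ### auxiliary defs -/

def noTriple (w : List ℕ) : Prop :=
  ∀ i, i + 2 < w.length →
    ¬(w.getD i 0 = w.getD (i+1) 0 ∧ w.getD (i+1) 0 = w.getD (i+2) 0)

def lastr : List ℕ → ℕ
  | [] => 0
  | x :: _ => x

def eqr : List ℕ → Bool
  | x :: y :: _ => x == y
  | _ => false

def botr : List ℕ → ℕ
  | x :: y :: t => if x < y then x else botr (y :: t)
  | _ => 1

def stepF (r : List ℕ) : Finset ℕ :=
  if eqr r then (Finset.Icc (botr r) (lastr r + 1)).erase (lastr r)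
  else Finset.Icc (botr r) (lastr r + 1)

inductive GoodR : List ℕ → Prop
  | base : GoodR [1]
  | step (r x) : GoodR r → x ∈ stepF r → GoodR (x :: r)

def Cond (w : List ℕ) : Prop := IsCatalan w ∧ IsFlattened w ∧ noTriple w

/-! ### getD / append lemmas -/

lemma getD_app_lt (w : List ℕ) (x : ℕ) {i : ℕ} (h : i < w.length) :
    (w ++ [x]).getD i 0 = w.getD i 0 := List.getD_append _ _ _ _ h

lemma getD_app_len (w : List ℕ) (x : ℕ) : (w ++ [x]).getD w.length 0 = x := by
  rw [List.getD_append_right _ _ _ _ le_rfl]; simp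

lemma getD_rev_last (x : ℕ) (t : List ℕ) :
    (x :: t).reverse.getD t.length 0 = x := by
  rw [List.reverse_cons]
  have := getD_app_len t.reverse x
  rwa [List.length_reverse] at this

lemma isCatalan_append {w : List ℕ} (x : ℕ) (hw : w ≠ []) :
    IsCatalan (w ++ [x]) ↔
      IsCatalan w ∧ 1 ≤ x ∧ x ≤ w.getD (w.length - 1) 0 + 1 := by
  have hl : 1 ≤ w.length := List.length_pos_iff.2 hw
  constructor
  · rintro ⟨-, h1, h2⟩
    rw [getD_app_lt w x (by omega)] at h1
    refine ⟨⟨hw, h1, fun i hi => ?_⟩, ?_⟩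
    · have := h2 i (by simp; omega)
      rwa [getD_app_lt w x (by omega), getD_app_lt w x (by omega)] at this
    · have := h2 (w.length - 1) (by simp; omega)
      rw [show w.length - 1 + 1 = w.length by omega, getD_app_len,
        getD_app_lt w x (by omega)] at this
      exact this
  · rintro ⟨⟨-, h1, h2⟩, hx1, hx2⟩
    refine ⟨by simp, ?_, fun i hi => ?_⟩
    · rwa [getD_app_lt w x (by omega)]
    · simp only [List.length_append, List.length_singleton] at hi
      rcases lt_or_eq_of_le (Nat.lt_succ_iff.1 hi) with h | h
      · have := h2 i h
        rwa [getD_app_lt w x (by omega), getD_app_lt w x (by omega)]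
      · rw [h, getD_app_len, getD_app_lt w x (by omega),
          show i = w.length - 1 by omega]
        exact ⟨hx1, hx2⟩

lemma runStart_app_lt {w : List ℕ} (x : ℕ) {i : ℕ} (h : i < w.length) :
    RunStart (w ++ [x]) i ↔ RunStart w i := by
  unfold RunStart
  rw [getD_app_lt w x h, getD_app_lt w x (by omega)]
  simp only [List.length_append, List.length_singleton]
  constructor <;> rintro ⟨-, h2⟩ <;> exact ⟨by omega, h2⟩

lemma runStart_app_len {w : List ℕ} (x : ℕ) (hw : w ≠ []) :
    RunStart (w ++ [x]) w.length ↔ x < w.getD (w.length - 1) 0 := by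
  have hl : 1 ≤ w.length := List.length_pos_iff.2 hw
  unfold RunStart
  rw [getD_app_len, getD_app_lt w x (by omega)]
  simp only [List.length_append, List.length_singleton]
  constructor
  · rintro ⟨-, h | h⟩
    · omega
    · exact h
  · intro h; exact ⟨by omega, Or.inr h⟩

lemma isFlattened_append {w : List ℕ} (x : ℕ) (hw : w ≠ []) :
    IsFlattened (w ++ [x]) ↔
      IsFlattened w ∧ (x < w.getD (w.length - 1) 0 →
        ∀ i, RunStart w i → w.getD i 0 ≤ x) := by
  have hl : 1 ≤ w.length := List.length_pos_iff.2 hw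
  constructor
  · intro H
    constructor
    · intro i j hi hj hij
      have := H i j ((runStart_app_lt x hi.1).2 hi) ((runStart_app_lt x hj.1).2 hj) hij
      rwa [getD_app_lt w x hi.1, getD_app_lt w x hj.1] at this
    · intro hx i hi
      have := H i w.length ((runStart_app_lt x hi.1).2 hi)
        ((runStart_app_len x hw).2 hx) (le_of_lt hi.1)
      rwa [getD_app_lt w x hi.1, getD_app_len] at this
  · rintro ⟨H1, H2⟩ i j hi hj hij
    have hjl : j < w.length + 1 := by simpa using hj.1
    rcases lt_or_eq_of_le (Nat.lt_succ_iff.1 hjl) with hj' | hj'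
    · have hi' : i < w.length := lt_of_le_of_lt hij hj'
      rw [getD_app_lt w x hi', getD_app_lt w x hj']
      exact H1 i j ((runStart_app_lt x hi').1 hi) ((runStart_app_lt x hj').1 hj) hij
    · subst hj'
      rcases lt_or_eq_of_le hij with hi' | hi'
      · rw [getD_app_lt w x hi', getD_app_len]
        exact H2 ((runStart_app_len x hw).1 hj) i ((runStart_app_lt x hi').1 hi)
      · rw [hi']
  -- done

lemma noTriple_append {w : List ℕ} (x : ℕ) :
    noTriple (w ++ [x]) ↔
      noTriple w ∧ ¬(2 ≤ w.length ∧ x = w.getD (w.length - 1) 0 ∧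
        w.getD (w.length - 1) 0 = w.getD (w.length - 2) 0) := by
  constructor
  · intro H
    constructor
    · intro i hi
      have := H i (by simp; omega)
      rwa [getD_app_lt w x (by omega), getD_app_lt w x (by omega),
        getD_app_lt w x (by omega)] at this
    · rintro ⟨h2, hxa, hab⟩
      have := H (w.length - 2) (by simp; omega)
      rw [show w.length - 2 + 2 = w.length by omega,
        show w.length - 2 + 1 = w.length - 1 by omega, getD_app_len,
        getD_app_lt w x (by omega), getD_app_lt w x (by omega)] at this
      exact this ⟨hab.symm, hxa.symm⟩
  · rintro ⟨H1, H2⟩ i hi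
    simp only [List.length_append, List.length_singleton] at hi
    rcases lt_or_eq_of_le (Nat.lt_succ_iff.1 hi) with h | h
    · rw [getD_app_lt w x (by omega), getD_app_lt w x (by omega),
        getD_app_lt w x (by omega)]
      exact H1 i (by omega)
    · rintro ⟨e1, e2⟩
      rw [getD_app_lt w x (by omega), getD_app_lt w x (by omega)] at e1
      rw [getD_app_lt w x (by omega), show i + 2 = w.length by omega, getD_app_len] at e2
      exact H2 ⟨by omega, by rw [show w.length - 1 = i + 1 by omega]; exact e2.symm,
        by rw [show w.length - 1 = i + 1 by omega, show w.length - 2 = i by omega]; exact e1.symm⟩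

lemma cat_one_le {w : List ℕ} (h : IsCatalan w) : ∀ i < w.length, 1 ≤ w.getD i 0 := by
  intro i hi
  induction i with
  | zero => rw [h.2.1]
  | succ k ih => exact (h.2.2 k hi).1

lemma botr_cons_lt {x y : ℕ} {t : List ℕ} (h : x < y) : botr (x :: y :: t) = x := by
  simp [botr, h]

lemma botr_cons_ge {x y : ℕ} {t : List ℕ} (h : ¬ x < y) :
    botr (x :: y :: t) = botr (y :: t) := by simp [botr, h]

lemma lastr_rev (x : ℕ) (t : List ℕ) :
    (x :: t).reverse.getD ((x :: t).length - 1) 0 = lastr (x :: t) := by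
  rw [show (x :: t).length - 1 = t.length from rfl]
  exact getD_rev_last x t

lemma lastr_rev' (x : ℕ) (t : List ℕ) :
    (x :: t).reverse.getD ((x :: t).reverse.length - 1) 0 = lastr (x :: t) := by
  rw [List.length_reverse]
  exact lastr_rev x t

lemma length_rev_cons (x : ℕ) (t : List ℕ) :
    (x :: t).reverse.length = t.length + 1 := by simp

lemma maxRun : ∀ r : List ℕ, IsCatalan r.reverse →
    ∃ i, RunStart r.reverse i ∧ r.reverse.getD i 0 = botr r ∧
      ∀ j, RunStart r.reverse j → j ≤ i := by
  intro r
  induction r with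
  | nil => intro h; exact absurd rfl h.1
  | cons x t ih =>
    intro h
    match t with
    | [] =>
      refine ⟨0, ⟨by simp, Or.inl rfl⟩, ?_, fun j hj => by
        have : j < 1 := by simpa using hj.1
        omega⟩
      have := h.2.1
      simp only [List.reverse_singleton] at this ⊢
      rw [this]; rfl
    | y :: t' =>
      have hrev : (x :: y :: t').reverse = (y :: t').reverse ++ [x] := by
        simp
      have hw' : (y :: t').reverse ≠ [] := by simp
      have hlen : (y :: t').reverse.length = t'.length + 1 := by simp
      have hcat' : IsCatalan (y :: t').reverse := by
        rw [hrev] at h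
        exact ((isCatalan_append x hw').1 h).1
      have hlast : (y :: t').reverse.getD ((y :: t').reverse.length - 1) 0 = y := by
        rw [hlen]; simpa using getD_rev_last y t'
      by_cases hxy : x < y
      · refine ⟨(y :: t').reverse.length, ?_, ?_, ?_⟩
        · rw [hrev, runStart_app_len x hw', hlast]; exact hxy
        · rw [hrev, getD_app_len, botr_cons_lt hxy]
        · intro j hj
          have := hj.1
          rw [hrev] at this; simp only [List.length_append, List.length_singleton] at this
          omega
      · obtain ⟨i, hi1, hi2, hi3⟩ := ih hcat'
        refine ⟨i, ?_, ?_, ?_⟩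
        · rw [hrev, runStart_app_lt x hi1.1]; exact hi1
        · rw [hrev, getD_app_lt _ x hi1.1, hi2, botr_cons_ge hxy]
        · intro j hj
          rw [hrev] at hj
          have hjl := hj.1
          simp only [List.length_append, List.length_singleton] at hjl
          rcases lt_or_eq_of_le (Nat.lt_succ_iff.1 hjl) with h' | h'
          · exact hi3 j ((runStart_app_lt x h').1 hj)
          · exfalso
            rw [h', runStart_app_len x hw', hlast] at hj
            exact hxy hj

lemma botr_le_lastr : ∀ r : List ℕ, IsCatalan r.reverse → botr r ≤ lastr r := by
  intro r
  induction r with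
  | nil => intro h; exact absurd rfl h.1
  | cons x t ih =>
    intro h
    match t with
    | [] =>
      show (1 : ℕ) ≤ x
      have := h.2.1
      simp only [List.reverse_singleton] at this
      simp [List.getD] at this
      omega
    | y :: t' =>
      have hrev : (x :: y :: t').reverse = (y :: t').reverse ++ [x] := by simp
      have hw' : (y :: t').reverse ≠ [] := by simp
      have hcat' : IsCatalan (y :: t').reverse := by
        rw [hrev] at h; exact ((isCatalan_append x hw').1 h).1
      by_cases hxy : x < y
      · show botr (x :: y :: t') ≤ x
        rw [botr_cons_lt hxy]
      · have := ih hcat'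
        show botr (x :: y :: t') ≤ x
        rw [botr_cons_ge hxy]
        calc botr (y :: t') ≤ lastr (y :: t') := this
        _ = y := rfl
        _ ≤ x := by omega

lemma one_le_botr {r : List ℕ} (h : IsCatalan r.reverse) : 1 ≤ botr r := by
  obtain ⟨i, hi1, hi2, -⟩ := maxRun r h
  rw [← hi2]
  exact cat_one_le h i hi1.1

lemma runStart_le_botr {r : List ℕ} (hcat : IsCatalan r.reverse)
    (hflat : IsFlattened r.reverse) :
    ∀ i, RunStart r.reverse i → r.reverse.getD i 0 ≤ botr r := by
  intro i hi
  obtain ⟨j, hj1, hj2, hj3⟩ := maxRun r hcat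
  rw [← hj2]
  exact hflat i j hi hj1 (hj3 i hi)

lemma lastr_one_le {r : List ℕ} (hr : r ≠ []) (hcat : IsCatalan r.reverse) :
    1 ≤ lastr r :=
  le_trans (one_le_botr hcat) (botr_le_lastr r hcat)

lemma cond_of_goodR : ∀ r, GoodR r → r ≠ [] ∧ Cond r.reverse := by
  intro r hr
  induction hr with
  | base =>
    refine ⟨by simp, ⟨by simp, by simp [List.getD], fun i hi => by simp at hi⟩,
      fun i j hi hj hij => ?_, fun i hi => by simp at hi⟩
    have h1 : i < 1 := by simpa using hi.1
    have h2 : j < 1 := by simpa using hj.1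
    have : i = 0 := by omega
    subst this
    have : j = 0 := by omega
    subst this
    exact le_rfl
  | step r x hg hx ih =>
    obtain ⟨hr, hcat, hflat, htri⟩ := ih
    obtain ⟨c, t, rfl⟩ : ∃ c t, r = c :: t := by
      cases r with
      | nil => exact absurd rfl hr
      | cons c t => exact ⟨c, t, rfl⟩
    have hrev : (x :: c :: t).reverse = (c :: t).reverse ++ [x] := by simp
    have hw' : (c :: t).reverse ≠ [] := by simp
    have hxIcc : x ∈ Finset.Icc (botr (c :: t)) (lastr (c :: t) + 1) := by
      unfold stepF at hx
      by_cases he : eqr (c :: t) <;> simp [he] at hx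
      · exact Finset.mem_Icc.2 ⟨hx.2.1, hx.2.2⟩
      · exact Finset.mem_Icc.2 hx
    obtain ⟨hb, hub⟩ := Finset.mem_Icc.1 hxIcc
    refine ⟨by simp, ?_, ?_, ?_⟩
    · rw [hrev, isCatalan_append x hw']
      exact ⟨hcat, le_trans (one_le_botr hcat) hb, by
        rw [lastr_rev']
        exact le_trans hub (by exact le_rfl)⟩
    · rw [hrev, isFlattened_append x hw']
      refine ⟨hflat, fun _ i hi => ?_⟩
      exact le_trans (runStart_le_botr hcat hflat i hi) hb
    · rw [hrev, noTriple_append x]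
      refine ⟨htri, ?_⟩
      rintro ⟨hlen, he1, he2⟩
      rw [lastr_rev'] at he1
      obtain ⟨d, t', rfl⟩ : ∃ d t', t = d :: t' := by
        cases t with
        | nil => simp at hlen
        | cons d t' => exact ⟨d, t', rfl⟩
      have he2' : (c :: d :: t').reverse.getD ((c :: d :: t').reverse.length - 2) 0 = d := by
        have h5 : (c :: d :: t').reverse = (d :: t').reverse ++ [c] := by simp
        rw [h5, List.length_append]
        simp only [List.length_reverse, List.length_cons, List.length_singleton]
        rw [show t'.length + 1 + ([].length + 1) - 2 = (d :: t').length - 1 by simp]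
        rw [getD_app_lt _ c (by simp), lastr_rev]
        rfl
      rw [lastr_rev', he2'] at he2
      -- he2 : lastr (c :: d :: t') = d, i.e. c = d
      have hcd : c = d := he2
      have heq : eqr (c :: d :: t') = true := by
        simp [eqr, hcd]
      unfold stepF at hx
      rw [heq, if_pos rfl] at hx
      exact (Finset.mem_erase.1 hx).1 (by rw [he1])

lemma goodR_of_cond : ∀ r, r ≠ [] → Cond r.reverse → GoodR r := by
  intro r
  induction r with
  | nil => intro h; exact absurd rfl h
  | cons x t ih =>
    intro _ hc
    obtain ⟨hcat, hflat, htri⟩ := hc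
    match t with
    | [] =>
      have hx1 : x = 1 := by
        have := hcat.2.1
        simp only [List.reverse_singleton] at this
        simpa [List.getD] using this
      rw [hx1]; exact GoodR.base
    | c :: t' =>
      have hrev : (x :: c :: t').reverse = (c :: t').reverse ++ [x] := by simp
      have hw' : (c :: t').reverse ≠ [] := by simp
      rw [hrev] at hcat hflat htri
      rw [isCatalan_append x hw'] at hcat
      rw [isFlattened_append x hw'] at hflat
      rw [noTriple_append x] at htri
      obtain ⟨hcat', hx1, hx2⟩ := hcat
      obtain ⟨hflat', hflat2⟩ := hflat
      obtain ⟨htri', htri2⟩ := htri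
      have hgood : GoodR (c :: t') := ih (by simp) ⟨hcat', hflat', htri'⟩
      rw [lastr_rev'] at hx2
      have hbx : botr (c :: t') ≤ x := by
        by_cases hlt : x < lastr (c :: t')
        · obtain ⟨i, hi1, hi2, -⟩ := maxRun _ hcat'
          rw [← hi2]
          exact hflat2 (by rwa [lastr_rev']) i hi1
        · exact le_trans (botr_le_lastr _ hcat') (by omega)
      have hxIcc : x ∈ Finset.Icc (botr (c :: t')) (lastr (c :: t') + 1) :=
        Finset.mem_Icc.2 ⟨hbx, hx2⟩
      refine GoodR.step _ x hgood ?_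
      unfold stepF
      by_cases he : eqr (c :: t')
      · rw [if_pos he]
        refine Finset.mem_erase.2 ⟨?_, hxIcc⟩
        -- x ≠ lastr
        obtain ⟨d, t'', rfl⟩ : ∃ d t'', t' = d :: t'' := by
          cases t' with
          | nil => simp [eqr] at he
          | cons d t'' => exact ⟨d, t'', rfl⟩
        have hcd : c = d := by simpa [eqr] using he
        intro hxl
        apply htri2
        refine ⟨by simp, ?_, ?_⟩
        · rw [lastr_rev']; exact hxl
        · rw [lastr_rev']
          have he2' : (c :: d :: t'').reverse.getD ((c :: d :: t'').reverse.length - 2) 0 = d := by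
            have h5 : (c :: d :: t'').reverse = (d :: t'').reverse ++ [c] := by simp
            rw [h5, List.length_append]
            simp only [List.length_reverse, List.length_cons, List.length_singleton]
            rw [show t''.length + 1 + ([].length + 1) - 2 = (d :: t'').length - 1 by simp]
            rw [getD_app_lt _ c (by simp), lastr_rev]
            rfl
          rw [he2']
          exact hcd
      · rw [if_neg he]; exact hxIcc

def Fc : ℕ → Finset (List ℕ)
  | 0 => ∅
  | 1 => {[1]}
  | n + 2 => (Fc (n + 1)).biUnion fun r => (stepF r).image (· :: r)

lemma goodR_ne_nil {r : List ℕ} (h : GoodR r) : r ≠ [] := by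
  cases h <;> simp

lemma goodR_length {r : List ℕ} (h : GoodR r) : 1 ≤ r.length :=
  List.length_pos_iff.2 (goodR_ne_nil h)

lemma mem_Fc : ∀ n r, r ∈ Fc n ↔ GoodR r ∧ r.length = n := by
  intro n
  induction n with
  | zero =>
    intro r
    simp only [Fc, Finset.notMem_empty, false_iff, not_and]
    intro hg
    have := goodR_length hg
    omega
  | succ m ih =>
    intro r
    match m with
    | 0 =>
      simp only [Fc, Finset.mem_singleton]
      constructor
      · rintro rfl; exact ⟨GoodR.base, rfl⟩
      · rintro ⟨hg, hl⟩
        cases hg with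
        | base => rfl
        | step r' x hg' hx =>
          have := goodR_length hg'
          simp only [List.length_cons] at hl
          omega
    | k + 1 =>
      simp only [Fc, Finset.mem_biUnion, Finset.mem_image]
      constructor
      · rintro ⟨r', hr', x, hx, rfl⟩
        obtain ⟨hg', hl'⟩ := (ih r').1 hr'
        exact ⟨GoodR.step r' x hg' hx, by simp [hl']⟩
      · rintro ⟨hg, hl⟩
        cases hg with
        | base => simp at hl
        | step r' x hg' hx =>
          refine ⟨r', (ih r').2 ⟨hg', ?_⟩, x, hx, rfl⟩
          simp only [List.length_cons] at hl
          omega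

/-! ### counting -/

lemma goodR_inv {r : List ℕ} (h : GoodR r) :
    1 ≤ botr r ∧ botr r ≤ lastr r := by
  have hc := (cond_of_goodR r h).2.1
  exact ⟨one_le_botr hc, botr_le_lastr r hc⟩

lemma stepF_decomp {r : List ℕ} (h : GoodR r) :
    stepF r = insert (lastr r + 1)
      ((Finset.Icc (botr r) (lastr r - 1)) ∪ (if eqr r then ∅ else {lastr r})) := by
  obtain ⟨h1, h2⟩ := goodR_inv h
  unfold stepF
  by_cases he : eqr r
  · rw [if_pos he, if_pos he]
    ext y
    simp only [Finset.mem_erase, Finset.mem_Icc, Finset.mem_insert, Finset.mem_union,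
      Finset.notMem_empty, or_false, false_or, Finset.mem_singleton]
    omega
  · rw [if_neg he, if_neg he]
    ext y
    simp only [Finset.mem_Icc, Finset.mem_insert, Finset.mem_union, Finset.mem_singleton]
    omega

lemma sum_Fc_succ (g : List ℕ → ℕ) (n : ℕ) :
    ∑ r' ∈ Fc (n + 2), g r' = ∑ r ∈ Fc (n + 1), ∑ x ∈ stepF r, g (x :: r) := by
  show ∑ r' ∈ (Fc (n + 1)).biUnion (fun r => (stepF r).image (· :: r)), g r' = _
  rw [Finset.sum_biUnion]
  · refine Finset.sum_congr rfl fun r _ => ?_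
    rw [Finset.sum_image]
    intro a _ b _ hab
    exact (List.cons.injEq _ _ _ _ ▸ hab).1
  · intro r _ s _ hrs
    simp only [Function.onFun]
    rw [Finset.disjoint_left]
    intro a ha hb
    simp only [Finset.mem_image] at ha hb
    obtain ⟨x, -, rfl⟩ := ha
    obtain ⟨y, -, he⟩ := hb
    exact hrs ((List.cons.injEq _ _ _ _ ▸ he).2.symm ▸ rfl)

lemma stepSumEval (g : ℕ → ℕ) {r : List ℕ} (h : GoodR r)
    (hIcc : ∀ x, botr r ≤ x → x ≤ lastr r - 1 → g x = 0) :
    ∑ x ∈ stepF r, g x = g (lastr r + 1) + (if eqr r then 0 else g (lastr r)) := by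
  obtain ⟨h1, h2⟩ := goodR_inv h
  rw [stepF_decomp h]
  rw [Finset.sum_insert, Finset.sum_union]
  · rw [Finset.sum_eq_zero (fun x hx => hIcc x (Finset.mem_Icc.1 hx).1 (Finset.mem_Icc.1 hx).2)]
    by_cases he : eqr r
    · rw [if_pos he, if_pos he]; simp
    · rw [if_neg he, if_neg he]; simp
  · by_cases he : eqr r
    · rw [if_pos he]; simp
    · rw [if_neg he]
      rw [Finset.disjoint_singleton_right, Finset.mem_Icc]
      omega
  · simp only [Finset.mem_union, Finset.mem_Icc, not_or]
    constructor
    · omega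
    · by_cases he : eqr r
      · rw [if_pos he]; simp
      · rw [if_neg he]; simp

def Tn (n : ℕ) : ℕ := (Fc n).card
def En (n : ℕ) : ℕ := ∑ r ∈ Fc n, (if eqr r then 1 else 0)
def Pn (n : ℕ) : ℕ := ∑ r ∈ Fc n, (if eqr r then 0 else lastr r - botr r)
def Qn (n : ℕ) : ℕ := ∑ r ∈ Fc n, (if eqr r then lastr r - botr r else 0)
def Sn (n : ℕ) : ℕ := ∑ r ∈ Fc n, (lastr r - botr r)

lemma SPQ (n : ℕ) : Sn n = Pn n + Qn n := by
  unfold Sn Pn Qn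
  rw [← Finset.sum_add_distrib]
  refine Finset.sum_congr rfl fun r _ => ?_
  by_cases he : eqr r <;> simp [he]

lemma good_of_mem {n : ℕ} {r : List ℕ} (h : r ∈ Fc n) : GoodR r := ((mem_Fc n r).1 h).1

-- helper: destructure a good r
lemma good_cons {r : List ℕ} (h : GoodR r) : ∃ c t, r = c :: t := by
  cases r with
  | nil => exact absurd rfl (goodR_ne_nil h)
  | cons c t => exact ⟨c, t, rfl⟩

lemma eqr_cons (x c : ℕ) (t : List ℕ) : eqr (x :: c :: t) = (x == c) := rfl

lemma lastr_cons (c : ℕ) (t : List ℕ) : lastr (c :: t) = c := rfl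

lemma stepF_card {r : List ℕ} (h : GoodR r) :
    (stepF r).card + (if eqr r then 1 else 0) = (lastr r - botr r) + 2 := by
  obtain ⟨h1, h2⟩ := goodR_inv h
  rw [stepF_decomp h]
  rw [Finset.card_insert_of_notMem, Finset.card_union_of_disjoint]
  · rw [Nat.card_Icc]
    by_cases he : eqr r
    · rw [if_pos he, if_pos he]; simp; omega
    · rw [if_neg he, if_neg he]; simp; omega
  · by_cases he : eqr r
    · rw [if_pos he]; simp
    · rw [if_neg he]
      rw [Finset.disjoint_singleton_right, Finset.mem_Icc]
      omega
  · simp only [Finset.mem_union, Finset.mem_Icc, not_or]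
    refine ⟨by omega, ?_⟩
    by_cases he : eqr r
    · rw [if_pos he]; simp
    · rw [if_neg he]; simp

lemma R1 (n : ℕ) : Tn (n + 2) + En (n + 1) = Sn (n + 1) + 2 * Tn (n + 1) := by
  have h1 : Tn (n + 2) = ∑ r ∈ Fc (n + 1), (stepF r).card := by
    unfold Tn
    rw [Finset.card_eq_sum_ones, sum_Fc_succ (fun _ => 1)]
    exact Finset.sum_congr rfl fun r _ => (Finset.card_eq_sum_ones _).symm
  rw [h1]
  unfold En Sn Tn
  rw [← Finset.sum_add_distrib]
  have h2 : ∀ r ∈ Fc (n + 1), (stepF r).card + (if eqr r then 1 else 0)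
      = (lastr r - botr r) + 2 := fun r hr => stepF_card (good_of_mem hr)
  rw [Finset.sum_congr rfl h2, Finset.sum_add_distrib, Finset.sum_const,
    smul_eq_mul, Finset.card_eq_sum_ones]
  ring

lemma R2 (n : ℕ) : En (n + 2) + En (n + 1) = Tn (n + 1) := by
  unfold En Tn
  rw [sum_Fc_succ (fun r' => if eqr r' then 1 else 0)]
  have h2 : ∀ r ∈ Fc (n + 1), (∑ x ∈ stepF r, (if eqr (x :: r) then 1 else 0))
      = (if eqr r then 0 else 1) := by
    intro r hr
    have hg := good_of_mem hr
    obtain ⟨h1, h2⟩ := goodR_inv hg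
    obtain ⟨c, t, rfl⟩ := good_cons hg
    rw [stepSumEval (fun x => if eqr (x :: c :: t) then 1 else 0) hg
      (fun x hx1 hx2 => by
        show (if eqr (x :: c :: t) = true then 1 else 0) = 0
        rw [eqr_cons]
        rw [lastr_cons] at hx2
        have hxc : ¬ ((x == c) = true) := by
          simp only [beq_iff_eq]
          rw [lastr_cons] at h2
          omega
        rw [if_neg hxc])]
    rw [lastr_cons, eqr_cons, eqr_cons]
    simp
  rw [Finset.sum_congr rfl h2, ← Finset.sum_add_distrib, Finset.card_eq_sum_ones]
  refine Finset.sum_congr rfl fun r _ => ?_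
  by_cases he : eqr r <;> simp [he]

lemma botr_cons_eval (x c : ℕ) (t : List ℕ) :
    botr (x :: c :: t) = if x < c then x else botr (c :: t) := by
  by_cases h : x < c
  · rw [botr_cons_lt h, if_pos h]
  · rw [botr_cons_ge h, if_neg h]

lemma R3 (n : ℕ) : Sn (n + 2) = Sn (n + 1) + Tn (n + 1) + Pn (n + 1) := by
  unfold Sn Tn Pn
  rw [sum_Fc_succ (fun r' => lastr r' - botr r')]
  have h2 : ∀ r ∈ Fc (n + 1), (∑ x ∈ stepF r, (lastr (x :: r) - botr (x :: r)))
      = ((lastr r - botr r) + 1) + (if eqr r then 0 else lastr r - botr r) := by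
    intro r hr
    have hg := good_of_mem hr
    obtain ⟨hb1, hb2⟩ := goodR_inv hg
    obtain ⟨c, t, rfl⟩ := good_cons hg
    rw [lastr_cons] at hb2
    rw [stepSumEval (fun x => lastr (x :: c :: t) - botr (x :: c :: t)) hg
      (fun x hx1 hx2 => by
        show lastr (x :: c :: t) - botr (x :: c :: t) = 0
        rw [lastr_cons] at hx2
        rw [lastr_cons, botr_cons_eval, if_pos (by omega)]
        omega)]
    simp only [lastr_cons, botr_cons_eval]
    rw [if_neg (by omega : ¬ c + 1 < c), if_neg (lt_irrefl c)]
    by_cases he : eqr (c :: t) <;> omega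
  rw [Finset.sum_congr rfl h2, Finset.sum_add_distrib, Finset.sum_add_distrib,
    Finset.card_eq_sum_ones]

lemma R4 (n : ℕ) : Pn (n + 2) = Sn (n + 1) + Tn (n + 1) := by
  unfold Sn Tn Pn
  rw [sum_Fc_succ (fun r' => if eqr r' then 0 else lastr r' - botr r')]
  have h2 : ∀ r ∈ Fc (n + 1),
      (∑ x ∈ stepF r, (if eqr (x :: r) then 0 else lastr (x :: r) - botr (x :: r)))
      = (lastr r - botr r) + 1 := by
    intro r hr
    have hg := good_of_mem hr
    obtain ⟨hb1, hb2⟩ := goodR_inv hg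
    obtain ⟨c, t, rfl⟩ := good_cons hg
    rw [lastr_cons] at hb2
    rw [stepSumEval (fun x => if eqr (x :: c :: t) then 0 else lastr (x :: c :: t) - botr (x :: c :: t)) hg
      (fun x hx1 hx2 => by
        show (if eqr (x :: c :: t) then 0 else lastr (x :: c :: t) - botr (x :: c :: t)) = 0
        rw [lastr_cons] at hx2
        by_cases he : eqr (x :: c :: t)
        · rw [if_pos he]
        · rw [if_neg he, lastr_cons, botr_cons_eval, if_pos (by omega)]
          omega)]
    simp only [lastr_cons, botr_cons_eval, eqr_cons]
    rw [if_neg (by simp : ¬ ((c + 1 == c) = true)), if_pos (by simp : ((c == c) = true)),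
      if_neg (by omega : ¬ c + 1 < c)]
    simp only [ite_self]
    omega
  rw [Finset.sum_congr rfl h2, Finset.sum_add_distrib, Finset.card_eq_sum_ones]

lemma R5 (n : ℕ) : Qn (n + 2) = Pn (n + 1) := by
  unfold Qn Pn
  rw [sum_Fc_succ (fun r' => if eqr r' then lastr r' - botr r' else 0)]
  refine Finset.sum_congr rfl fun r hr => ?_
  have hg := good_of_mem hr
  obtain ⟨hb1, hb2⟩ := goodR_inv hg
  obtain ⟨c, t, rfl⟩ := good_cons hg
  rw [lastr_cons] at hb2
  rw [stepSumEval (fun x => if eqr (x :: c :: t) then lastr (x :: c :: t) - botr (x :: c :: t) else 0) hg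
    (fun x hx1 hx2 => by
      show (if eqr (x :: c :: t) then lastr (x :: c :: t) - botr (x :: c :: t) else 0) = 0
      rw [lastr_cons] at hx2
      by_cases he : eqr (x :: c :: t)
      · have hxc : x = c := by simpa [eqr_cons] using he
        rw [if_pos he, lastr_cons, botr_cons_eval, if_pos (by omega)]
        omega
      · rw [if_neg he])]
  simp only [lastr_cons, botr_cons_eval, eqr_cons]
  rw [if_neg (by simp : ¬ ((c + 1 == c) = true)), if_pos (by simp : ((c == c) = true)),
    if_neg (lt_irrefl c)]
  by_cases he : eqr (c :: t) <;> omega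

lemma PE (m : ℕ) : Pn (m + 2) + En (m + 2) = Tn (m + 2) := by
  have h1 := R4 m
  have h2 := R1 m
  have h3 := R2 m
  omega

lemma Trec (n : ℕ) : Tn (n + 5) = 2 * Tn (n + 4) + 2 * Tn (n + 3) := by
  have h1 : Tn (n + 5) + En (n + 4) = Sn (n + 4) + 2 * Tn (n + 4) := R1 (n + 3)
  have h2 : Sn (n + 4) = Sn (n + 3) + Tn (n + 3) + Pn (n + 3) := R3 (n + 2)
  have h3 : Sn (n + 3) = Pn (n + 3) + Qn (n + 3) := SPQ (n + 3)
  have h4 : Qn (n + 3) = Pn (n + 2) := R5 (n + 1)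
  have h5 : Pn (n + 3) + En (n + 3) = Tn (n + 3) := PE (n + 1)
  have h6 : Pn (n + 2) + En (n + 2) = Tn (n + 2) := PE n
  have h7 : En (n + 4) + En (n + 3) = Tn (n + 3) := R2 (n + 2)
  have h8 : En (n + 3) + En (n + 2) = Tn (n + 2) := R2 (n + 1)
  omega

lemma Tn3 : Tn 3 = 4 := by decide
lemma Tn4 : Tn 4 = 11 := by decide

def rhs (n : ℕ) : ℕ :=
  ∑ k ∈ Finset.range (n / 2 + 1), Nat.choose (n - k) k * 2 ^ (n - k - 2)

lemma rhs_ext (n N : ℕ) (h : n / 2 + 1 ≤ N) :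
    ∑ k ∈ Finset.range N, Nat.choose (n - k) k * 2 ^ (n - k - 2) = rhs n := by
  unfold rhs
  symm
  refine Finset.sum_subset (Finset.range_subset_range.2 h) ?_
  intro k hk hk2
  simp only [Finset.mem_range] at hk hk2
  have : n - k < k := by omega
  rw [Nat.choose_eq_zero_of_lt this, zero_mul]

lemma cterm (m k : ℕ) (hm : 3 ≤ m) :
    Nat.choose (m + 2 - (k + 1)) (k + 1) * 2 ^ (m + 2 - (k + 1) - 2)
      = 2 * (Nat.choose (m + 1 - (k + 1)) (k + 1) * 2 ^ (m + 1 - (k + 1) - 2))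
        + 2 * (Nat.choose (m - k) k * 2 ^ (m - k - 2)) := by
  by_cases hk : k ≤ m - 2
  · have e1 : m + 2 - (k + 1) = (m - k) + 1 := by omega
    have e2 : m + 1 - (k + 1) = m - k := by omega
    rw [e1, e2, Nat.choose_succ_succ]
    have e3 : (m - k) + 1 - 2 = (m - k - 2) + 1 := by omega
    have e4 : m - k - 2 = m - k - 2 := rfl
    rw [e3, pow_succ]
    ring
  · have h1 : m + 2 - (k + 1) < k + 1 := by omega
    have h2 : m + 1 - (k + 1) < k + 1 := by omega
    have h3 : m - k < k := by omega
    rw [Nat.choose_eq_zero_of_lt h1, Nat.choose_eq_zero_of_lt h2,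
      Nat.choose_eq_zero_of_lt h3]
    ring

lemma rhs_rec (m : ℕ) (hm : 3 ≤ m) : rhs (m + 2) = 2 * rhs (m + 1) + 2 * rhs m := by
  have key : rhs (m + 2) = ∑ k ∈ Finset.range (m + 3),
      Nat.choose (m + 2 - k) k * 2 ^ (m + 2 - k - 2) :=
    (rhs_ext (m + 2) (m + 3) (by omega)).symm
  rw [key, Finset.sum_range_succ']
  have hterm : ∀ k ∈ Finset.range (m + 2),
      Nat.choose (m + 2 - (k + 1)) (k + 1) * 2 ^ (m + 2 - (k + 1) - 2)
      = 2 * (Nat.choose (m + 1 - (k + 1)) (k + 1) * 2 ^ (m + 1 - (k + 1) - 2))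
        + 2 * (Nat.choose (m - k) k * 2 ^ (m - k - 2)) := fun k _ => cterm m k hm
  rw [Finset.sum_congr rfl hterm, Finset.sum_add_distrib]
  have e0 : Nat.choose (m + 2 - 0) 0 * 2 ^ (m + 2 - 0 - 2)
      = 2 * (Nat.choose (m + 1 - 0) 0 * 2 ^ (m + 1 - 0 - 2)) := by
    simp only [Nat.sub_zero, Nat.choose_zero_right, one_mul]
    rw [show m + 2 - 2 = (m + 1 - 2) + 1 by omega, pow_succ]
    ring
  rw [e0]
  have h1 : ∑ k ∈ Finset.range (m + 2),
        2 * (Nat.choose (m + 1 - (k + 1)) (k + 1) * 2 ^ (m + 1 - (k + 1) - 2))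
      + 2 * (Nat.choose (m + 1 - 0) 0 * 2 ^ (m + 1 - 0 - 2)) = 2 * rhs (m + 1) := by
    rw [← Finset.mul_sum, ← mul_add]
    have hs := Finset.sum_range_succ'
      (fun k => Nat.choose (m + 1 - k) k * 2 ^ (m + 1 - k - 2)) (m + 2)
    rw [← hs, rhs_ext (m + 1) (m + 3) (by omega)]
  have h2 : ∑ k ∈ Finset.range (m + 2), 2 * (Nat.choose (m - k) k * 2 ^ (m - k - 2))
      = 2 * rhs m := by
    rw [← Finset.mul_sum, rhs_ext m (m + 2) (by omega)]
  omega

lemma rhs3 : rhs 3 = 4 := by decide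
lemma rhs4 : rhs 4 = 11 := by decide

lemma T_eq_rhs : ∀ k, Tn (k + 3) = rhs (k + 3) ∧ Tn (k + 4) = rhs (k + 4) := by
  intro k
  induction k with
  | zero => exact ⟨by rw [Tn3, rhs3], by rw [Tn4, rhs4]⟩
  | succ j ih =>
    refine ⟨ih.2, ?_⟩
    have h1 : Tn (j + 5) = 2 * Tn (j + 4) + 2 * Tn (j + 3) := Trec j
    have h2 : rhs (j + 5) = 2 * rhs (j + 4) + 2 * rhs (j + 3) := rhs_rec (j + 3) (by omega)
    rw [show j + 1 + 4 = j + 5 from rfl, h1, h2, ih.1, ih.2]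

lemma occAt_iff (w : List ℕ) (i : ℕ) :
    OccAt [1, 1, 1] w i ↔ i + 3 ≤ w.length ∧ w.getD i 0 = w.getD (i+1) 0 ∧
      w.getD (i+1) 0 = w.getD (i+2) 0 := by
  unfold OccAt
  simp only [List.length_cons, List.length_nil]
  constructor
  · rintro ⟨hlen, h⟩
    have h01 := h 0 (by norm_num) 1 (by norm_num)
    have h10 := h 1 (by norm_num) 0 (by norm_num)
    have h12 := h 1 (by norm_num) 2 (by norm_num)
    have h21 := h 2 (by norm_num) 1 (by norm_num)
    simp only [Nat.add_zero, show ([1,1,1] : List ℕ).getD 0 0 = 1 from rfl,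
      show ([1,1,1] : List ℕ).getD 1 0 = 1 from rfl,
      show ([1,1,1] : List ℕ).getD 2 0 = 1 from rfl, lt_irrefl, iff_false, not_lt] at h01 h10 h12 h21
    refine ⟨by omega, by omega, by omega⟩
  · rintro ⟨hlen, e1, e2⟩
    refine ⟨by omega, ?_⟩
    intro s hs t ht
    interval_cases s <;> interval_cases t <;>
      simp only [Nat.add_zero, show ([1,1,1] : List ℕ).getD 0 0 = 1 from rfl,
        show ([1,1,1] : List ℕ).getD 1 0 = 1 from rfl,
        show ([1,1,1] : List ℕ).getD 2 0 = 1 from rfl, lt_irrefl, iff_false, not_lt] <;>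
      omega

lemma numOcc_zero_iff (w : List ℕ) : numOcc [1, 1, 1] w = 0 ↔ noTriple w := by
  unfold numOcc
  have hfin : {i | OccAt [1, 1, 1] w i}.Finite := by
    refine Set.Finite.subset (Set.finite_Iio w.length) ?_
    intro i hi
    have := ((occAt_iff w i).1 hi).1
    simp only [Set.mem_Iio]
    omega
  rw [Set.ncard_eq_zero hfin]
  constructor
  · intro hemp i hi he
    have : i ∈ {i | OccAt [1, 1, 1] w i} := (occAt_iff w i).2 ⟨by omega, he.1, he.2⟩
    rw [hemp] at this
    exact this
  · intro hnt
    ext i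
    simp only [Set.mem_setOf_eq, Set.mem_empty_iff_false, iff_false]
    intro hocc
    obtain ⟨hlen, e1, e2⟩ := (occAt_iff w i).1 hocc
    exact hnt i (by omega) ⟨e1, e2⟩

/-- For every `n ≥ 3`, the number of flattened Catalan words of length `n`
avoiding the consecutive pattern `111` is `Σ_{k=0}^{⌊n/2⌋} C(n−k, k)·2^(n−k−2)`. -/
theorem avoid_111 (n : ℕ) (hn : 3 ≤ n) :
    {w ∈ FlatCat n | numOcc [1, 1, 1] w = 0}.ncard
      = ∑ k ∈ Finset.range (n / 2 + 1), Nat.choose (n - k) k * 2 ^ (n - k - 2) := by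
  have hset : {w ∈ FlatCat n | numOcc [1, 1, 1] w = 0}
      = ↑((Fc n).image List.reverse) := by
    ext w
    simp only [Set.mem_setOf_eq, Finset.coe_image, Set.mem_image, Finset.mem_coe,
      FlatCat]
    constructor
    · rintro ⟨⟨hlen, hcat, hflat⟩, hocc⟩
      refine ⟨w.reverse, ?_, by simp⟩
      rw [mem_Fc]
      refine ⟨goodR_of_cond _ (by simp [hcat.1]) ?_, by simp [hlen]⟩
      rw [List.reverse_reverse]
      exact ⟨hcat, hflat, (numOcc_zero_iff w).1 hocc⟩
    · rintro ⟨r, hr, rfl⟩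
      obtain ⟨hg, hlen⟩ := (mem_Fc n r).1 hr
      obtain ⟨hne, hcond⟩ := cond_of_goodR r hg
      exact ⟨⟨by simp [hlen], hcond.1, hcond.2.1⟩,
        (numOcc_zero_iff r.reverse).2 hcond.2.2⟩
  rw [hset, Set.ncard_coe_finset, Finset.card_image_of_injective _ List.reverse_injective]
  obtain ⟨k, rfl⟩ : ∃ k, n = k + 3 := ⟨n - 3, by omega⟩
  exact (T_eq_rhs k).1
end

section
/- The consecutive patterns 112 and 122 are equidistributed on 𝓕_n for every n ≥ 1: for all n ≥ 1 and all k ≥ 0, the number of π ∈ 𝓕_n with #112(π) = k equals the number of π ∈ 𝓕_n with #122(π) = k. -/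
/-!
Cut a word into its maximal weakly increasing runs and replace every run `r`, with first letter
`a` and last letter `b`, by its reverse under the reflection `x ↦ a + b - x`. Each new run is
again weakly increasing with the same first and last letter, so the run decomposition, the
descents between runs and the run-initial letters are unchanged: the map is an involution
preserving flattened Catalan words. Occurrences of `112` and `122` are weakly increasing, hence
lie inside single runs, and within a run the reflection exchanges them.
-/

open scoped BigOperators

open List

namespace FlattenedCatalan

lemma le_getLastD_of_mem {α : Type*} [Preorder α] {r : List α} (hr : r.IsChain (· ≤ ·))
    {d x : α} (hx : x ∈ r) : x ≤ r.getLastD d := by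
  rcases eq_nil_or_concat r with rfl | ⟨t, b, rfl⟩
  · cases hx
  rw [concat_eq_append] at hr hx ⊢
  rw [getLastD_concat]
  rcases mem_append.1 hx with hx | hx
  · exact (pairwise_append.1 (isChain_iff_pairwise.1 hr)).2.2 x hx b (mem_singleton_self b)
  · rw [mem_singleton.1 hx]

lemma getD_mem_of_lt {α : Type*} {l : List α} {d : α} {i : ℕ} (hi : i < l.length) :
    l.getD i d ∈ l := by
  rw [getD_eq_getElem _ _ hi]
  exact getElem_mem hi

def occ3 (P : ℕ → ℕ → ℕ → Prop) (w : List ℕ) : Set ℕ :=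
  {i | i + 3 ≤ w.length ∧ P (w.getD i 0) (w.getD (i + 1) 0) (w.getD (i + 2) 0)}

lemma occ3_finite (P : ℕ → ℕ → ℕ → Prop) (w : List ℕ) : (occ3 P w).Finite :=
  (Set.finite_Iio w.length).subset fun _ hi => Set.mem_Iio.2 (by have := hi.1; omega)

lemma setOf_occAt_112 (w : List ℕ) :
    {i | OccAt [1, 1, 2] w i} = occ3 (fun x y z => x = y ∧ y < z) w := by
  ext i
  simp only [OccAt, occ3, Set.mem_ofPred_eq, length_cons, length_nil, Nat.forall_lt_succ_left',
    getD_cons_zero, getD_cons_succ, Nat.add_zero, zero_add, Nat.reduceAdd, Nat.not_lt_zero,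
    IsEmpty.forall_iff, implies_true, and_true]
  omega

lemma setOf_occAt_122 (w : List ℕ) :
    {i | OccAt [1, 2, 2] w i} = occ3 (fun x y z => x < y ∧ y = z) w := by
  ext i
  simp only [OccAt, occ3, Set.mem_ofPred_eq, length_cons, length_nil, Nat.forall_lt_succ_left',
    getD_cons_zero, getD_cons_succ, Nat.add_zero, zero_add, Nat.reduceAdd, Nat.not_lt_zero,
    IsEmpty.forall_iff, implies_true, and_true]
  omega

lemma occ3_congr {P Q : ℕ → ℕ → ℕ → Prop} {w : List ℕ}
    (h : ∀ x ∈ w, ∀ y ∈ w, ∀ z ∈ w, (P x y z ↔ Q x y z)) : occ3 P w = occ3 Q w := by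
  ext i
  simp only [occ3, Set.mem_ofPred_eq, and_congr_right_iff]
  intro hi
  exact h _ (getD_mem_of_lt (by omega)) _ (getD_mem_of_lt (by omega))
    _ (getD_mem_of_lt (by omega))

lemma occ3_map (P : ℕ → ℕ → ℕ → Prop) (g : ℕ → ℕ) (w : List ℕ) :
    occ3 P (w.map g) = occ3 (fun x y z => P (g x) (g y) (g z)) w := by
  ext i
  simp only [occ3, Set.mem_ofPred_eq, length_map, and_congr_right_iff]
  intro hi
  simp (disch := omega) only [getD_eq_getElem?_getD, getElem?_map, getElem?_eq_getElem,
    Option.map_some, Option.getD_some]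

lemma ncard_occ3_reverse (P : ℕ → ℕ → ℕ → Prop) (w : List ℕ) :
    (occ3 P w.reverse).ncard = (occ3 (fun x y z => P z y x) w).ncard := by
  have hreflect : occ3 P w.reverse = (w.length - 3 - ·) '' occ3 (fun x y z => P z y x) w := by
    ext i
    simp only [occ3, Set.mem_ofPred_eq, Set.mem_image, length_reverse]
    constructor
    · rintro ⟨hi, hP⟩
      refine ⟨w.length - 3 - i, ⟨by omega, ?_⟩, by omega⟩
      simp (disch := omega) only [getD_reverse] at hP
      convert hP using 2 <;> omega
    · rintro ⟨j, ⟨hj, hP⟩, rfl⟩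
      refine ⟨by omega, ?_⟩
      simp (disch := omega) only [getD_reverse]
      convert hP using 2 <;> omega
  rw [hreflect, Set.InjOn.ncard_image]
  intro a ha b hb hab
  have := ha.1
  have := hb.1
  simp only at hab
  omega

lemma getD_length_lt_getD_pred {r s : List ℕ} (hr : r ≠ []) (hs : s ≠ [])
    (hrs : ∀ x ∈ r.getLast?, ∀ y ∈ s.head?, y < x) :
    (r ++ s).getD r.length 0 < (r ++ s).getD (r.length - 1) 0 := by
  have hr' := length_pos_iff.2 hr
  have hs' := length_pos_iff.2 hs
  rw [getD_append_right _ _ _ _ le_rfl, getD_append _ _ _ _ (by omega), Nat.sub_self]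
  simp (disch := omega) only [getLast?_eq_getElem?, head?_eq_getElem?, getElem?_eq_getElem,
    Option.mem_some_iff, forall_eq'] at hrs
  simpa (disch := omega) only [getD_eq_getElem] using hrs

/-- Weakly increasing triples cannot straddle a descent. -/
lemma occ3_append {P : ℕ → ℕ → ℕ → Prop}
    (hP : ∀ x y z, P x y z → x ≤ y ∧ y ≤ z) {r s : List ℕ}
    (hrs : ∀ x ∈ r.getLast?, ∀ y ∈ s.head?, y < x) :
    occ3 P (r ++ s) = occ3 P r ∪ (· + r.length) '' occ3 P s := by
  ext i
  simp only [occ3, Set.mem_union, Set.mem_image, Set.mem_ofPred_eq, length_append]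
  constructor
  · rintro ⟨hi, hPi⟩
    by_cases hleft : i + 3 ≤ r.length
    · simp (disch := omega) only [getD_append] at hPi
      exact Or.inl ⟨hleft, hPi⟩
    by_cases hright : r.length ≤ i
    · simp (disch := omega) only [getD_append_right] at hPi
      refine Or.inr ⟨i - r.length, ⟨by omega, ?_⟩, by omega⟩
      convert hPi using 2 <;> omega
    have hdesc := getD_length_lt_getD_pred (s := s) (by rintro rfl; simp at hright)
      (by rintro rfl; simp at hi; omega) hrs
    have hmono := hP _ _ _ hPi
    rcases (show r.length = i + 1 ∨ r.length = i + 2 by omega) with h | h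
    · rw [h, Nat.add_sub_cancel] at hdesc
      omega
    · rw [h, show i + 2 - 1 = i + 1 by omega] at hdesc
      omega
  · rintro (⟨hi, hPi⟩ | ⟨j, ⟨hj, hPj⟩, rfl⟩)
    · simp (disch := omega) only [getD_append]
      exact ⟨by omega, hPi⟩
    · simp (disch := omega) only [getD_append_right]
      refine ⟨by omega, ?_⟩
      convert hPj using 2 <;> omega

lemma ncard_occ3_append {P : ℕ → ℕ → ℕ → Prop}
    (hP : ∀ x y z, P x y z → x ≤ y ∧ y ≤ z) {r s : List ℕ}
    (hrs : ∀ x ∈ r.getLast?, ∀ y ∈ s.head?, y < x) :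
    (occ3 P (r ++ s)).ncard = (occ3 P r).ncard + (occ3 P s).ncard := by
  rw [occ3_append hP hrs, Set.ncard_union_eq ?_ (occ3_finite P r) ((occ3_finite P s).image _),
    (add_left_injective r.length).injOn.ncard_image]
  rw [Set.disjoint_left]
  rintro _ hi ⟨j, -, rfl⟩
  have := hi.1
  dsimp only at this
  omega

lemma runStart_append {r s : List ℕ} (hr : r ≠ []) (hsorted : r.IsChain (· ≤ ·))
    (hrs : ∀ x ∈ r.getLast?, ∀ y ∈ s.head?, y < x) (i : ℕ) :
    RunStart (r ++ s) i ↔ i = 0 ∨ (r.length ≤ i ∧ RunStart s (i - r.length)) := by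
  have hr' := length_pos_iff.2 hr
  simp only [RunStart, length_append]
  rcases (show i = 0 ∨ (0 < i ∧ i < r.length) ∨ i = r.length ∨ r.length < i by omega) with
    rfl | ⟨hi0, hir⟩ | rfl | hri
  · simp [hr']
  · have hstep := hsorted.getElem (i - 1) (by omega)
    simp (disch := omega) only [getD_append, getD_eq_getElem]
    simp only [show i - 1 + 1 = i by omega] at hstep
    omega
  · constructor
    · rintro ⟨h, -⟩
      exact Or.inr ⟨le_rfl, by omega, Or.inl (Nat.sub_self _)⟩
    · rintro (h | ⟨-, h, -⟩)
      · omega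
      · have hs : s ≠ [] := by rintro rfl; simp at h
        exact ⟨by omega, Or.inr (getD_length_lt_getD_pred hr hs hrs)⟩
  · simp (disch := omega) only [getD_append_right]
    rw [show i - 1 - r.length = i - r.length - 1 by omega]
    omega

def flipRun (r : List ℕ) : List ℕ :=
  (r.map (r.headD 0 + r.getLastD 0 - ·)).reverse

lemma length_flipRun (r : List ℕ) : (flipRun r).length = r.length := by
  simp [flipRun]

lemma flipRun_eq_nil_iff {r : List ℕ} : flipRun r = [] ↔ r = [] := by
  simp [flipRun]

lemma head?_flipRun (r : List ℕ) : (flipRun r).head? = r.head? := by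
  cases r with
  | nil => rfl
  | cons a t =>
    obtain ⟨l, hl⟩ : ∃ l, (a :: t).getLast? = some l :=
      ⟨_, getLast?_eq_some_getLast (cons_ne_nil a t)⟩
    rw [flipRun, head?_reverse, getLast?_map, hl]
    simp [hl]

lemma getLast?_flipRun (r : List ℕ) : (flipRun r).getLast? = r.getLast? := by
  cases r with
  | nil => rfl
  | cons a t =>
    obtain ⟨l, hl⟩ : ∃ l, (a :: t).getLast? = some l :=
      ⟨_, getLast?_eq_some_getLast (cons_ne_nil a t)⟩
    rw [flipRun, getLast?_reverse, head?_map]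
    simp [hl]

lemma isChain_le_flipRun {r : List ℕ} (hr : r.IsChain (· ≤ ·)) :
    (flipRun r).IsChain (· ≤ ·) := by
  rw [flipRun, isChain_reverse, isChain_map]
  exact hr.imp_of_mem_imp fun a b _ hb hab => by
    have := le_getLastD_of_mem (d := 0) hr hb
    omega

lemma flipRun_flipRun {r : List ℕ} (hr : r.IsChain (· ≤ ·)) : flipRun (flipRun r) = r := by
  have hK : (flipRun r).headD 0 + (flipRun r).getLastD 0 = r.headD 0 + r.getLastD 0 := by
    simp only [headD_eq_head?_getD, getLastD_eq_getLast?, head?_flipRun, getLast?_flipRun]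
  rw [flipRun, hK, flipRun, map_reverse, reverse_reverse, map_map]
  conv_rhs => rw [← map_id r]
  refine map_congr_left fun x hx => ?_
  have := le_getLastD_of_mem (d := 0) hr hx
  simp only [Function.comp_apply, id_eq]
  omega

lemma headD_le_of_mem_flipRun {r : List ℕ} (hr : r.IsChain (· ≤ ·)) {x : ℕ}
    (hx : x ∈ flipRun r) : r.headD 0 ≤ x := by
  obtain ⟨a, ha, rfl⟩ := mem_map.1 (mem_reverse.1 hx)
  have := le_getLastD_of_mem (d := 0) hr ha
  omega

lemma isChain_succ_flipRun {r : List ℕ} (hr : r.IsChain (· ≤ ·))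
    (hc : r.IsChain (fun a b => b ≤ a + 1)) :
    (flipRun r).IsChain (fun a b => b ≤ a + 1) := by
  rw [flipRun, isChain_reverse, isChain_map]
  exact hc.imp_of_mem_imp fun a b _ hb hab => by
    have := le_getLastD_of_mem (d := 0) hr hb
    omega

lemma ncard_occ3_122_flipRun {r : List ℕ} (hr : r.IsChain (· ≤ ·)) :
    (occ3 (fun x y z => x < y ∧ y = z) (flipRun r)).ncard
      = (occ3 (fun x y z => x = y ∧ y < z) r).ncard := by
  rw [flipRun, ncard_occ3_reverse, occ3_map, occ3_congr]
  intro x hx y hy z hz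
  have := le_getLastD_of_mem (d := 0) hr hx
  have := le_getLastD_of_mem (d := 0) hr hy
  have := le_getLastD_of_mem (d := 0) hr hz
  omega

def IsRunDecomposition (L : List (List ℕ)) : Prop :=
  [] ∉ L ∧ (∀ r ∈ L, r.IsChain (· ≤ ·)) ∧
    L.IsChain (fun r s => ∀ x ∈ r.getLast?, ∀ y ∈ s.head?, y < x)

def runs (w : List ℕ) : List (List ℕ) :=
  w.splitBy (· ≤ ·)

lemma runs_eq_iff {w : List ℕ} {L : List (List ℕ)} :
    runs w = L ↔ w = L.flatten ∧ IsRunDecomposition L := by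
  rw [runs, splitBy_eq_iff, IsRunDecomposition]
  refine and_congr_right fun _ => and_congr_right fun hL => and_congr (by simp) ?_
  refine IsChain.iff_of_mem_imp fun r s hr hs => ?_
  have hr : r ≠ [] := fun h => hL (h ▸ hr)
  have hs : s ≠ [] := fun h => hL (h ▸ hs)
  simp [hr, hs, head?_eq_some_head hs, getLast?_eq_some_getLast hr]

lemma flatten_runs (w : List ℕ) : (runs w).flatten = w :=
  flatten_splitBy _ w

lemma isRunDecomposition_runs (w : List ℕ) : IsRunDecomposition (runs w) :=
  (runs_eq_iff.1 rfl).2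

lemma runs_flatten {L : List (List ℕ)} (hL : IsRunDecomposition L) : runs L.flatten = L :=
  runs_eq_iff.2 ⟨rfl, hL⟩

lemma IsRunDecomposition.of_cons {r : List ℕ} {L : List (List ℕ)}
    (h : IsRunDecomposition (r :: L)) :
    r ≠ [] ∧ r.IsChain (· ≤ ·) ∧ IsRunDecomposition L ∧
      ∀ x ∈ r.getLast?, ∀ y ∈ L.flatten.head?, y < x := by
  obtain ⟨hnil, hsorted, hdesc⟩ := h
  refine ⟨fun h => hnil (h ▸ mem_cons_self), hsorted r mem_cons_self,
    ⟨fun h => hnil (mem_cons_of_mem r h), fun s hs => hsorted s (mem_cons_of_mem r hs),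
      hdesc.tail⟩, ?_⟩
  cases L with
  | nil => simp
  | cons s L =>
    have hs : s ≠ [] := fun h => hnil (h ▸ mem_cons_of_mem r mem_cons_self)
    rw [flatten_cons, head?_append_of_ne_nil _ hs]
    exact (isChain_cons_cons.1 hdesc).1

lemma head?_flatten_map_flipRun (L : List (List ℕ)) :
    (L.map flipRun).flatten.head? = L.flatten.head? := by
  induction L with
  | nil => rfl
  | cons r L ih => simp only [map_cons, flatten_cons, head?_append, head?_flipRun, ih]

lemma IsRunDecomposition.map_flipRun {L : List (List ℕ)} (hL : IsRunDecomposition L) :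
    IsRunDecomposition (L.map flipRun) := by
  obtain ⟨hnil, hsorted, hdesc⟩ := hL
  refine ⟨by simpa [flipRun_eq_nil_iff] using hnil, ?_, ?_⟩
  · simp only [mem_map, forall_exists_index, and_imp, forall_apply_eq_imp_iff₂]
    exact fun r hr => isChain_le_flipRun (hsorted r hr)
  · simpa only [isChain_map, head?_flipRun, getLast?_flipRun] using hdesc

def flipRuns (w : List ℕ) : List ℕ :=
  ((runs w).map flipRun).flatten

lemma flipRuns_involutive : Function.Involutive flipRuns := by
  intro w
  have hL := isRunDecomposition_runs w
  rw [flipRuns, flipRuns, runs_flatten hL.map_flipRun, map_map]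
  conv_rhs => rw [← flatten_runs w, ← map_id (runs w)]
  exact congrArg flatten (map_congr_left fun r hr => flipRun_flipRun (hL.2.1 r hr))

lemma length_flipRuns (w : List ℕ) : (flipRuns w).length = w.length := by
  conv_rhs => rw [← flatten_runs w]
  simp only [flipRuns, length_flatten, map_map, Function.comp_def, length_flipRun]

lemma head?_flipRuns (w : List ℕ) : (flipRuns w).head? = w.head? := by
  rw [flipRuns, head?_flatten_map_flipRun, flatten_runs]

lemma one_le_of_mem_flipRuns {w : List ℕ} (hw : ∀ x ∈ w, 1 ≤ x) {x : ℕ}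
    (hx : x ∈ flipRuns w) : 1 ≤ x := by
  simp only [flipRuns, mem_flatten, mem_map] at hx
  obtain ⟨_, ⟨r, hr, rfl⟩, hx⟩ := hx
  have hrw : ∀ y ∈ r, y ∈ w := fun y hy => flatten_runs w ▸ mem_flatten.2 ⟨r, hr, hy⟩
  cases r with
  | nil => cases hx
  | cons a t =>
    calc 1 ≤ a := hw a (hrw a mem_cons_self)
      _ ≤ x := headD_le_of_mem_flipRun ((isRunDecomposition_runs w).2.1 _ hr) hx

lemma isChain_succ_flipRuns {w : List ℕ} (hw : w.IsChain (fun a b => b ≤ a + 1)) :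
    (flipRuns w).IsChain (fun a b => b ≤ a + 1) := by
  have hL := isRunDecomposition_runs w
  rw [← flatten_runs w, isChain_flatten hL.1] at hw
  rw [flipRuns, isChain_flatten hL.map_flipRun.1]
  refine ⟨?_, by simpa only [isChain_map, head?_flipRun, getLast?_flipRun] using hw.2⟩
  simp only [mem_map, forall_exists_index, and_imp, forall_apply_eq_imp_iff₂]
  exact fun r hr => isChain_succ_flipRun (hL.2.1 r hr) (hw.1 r hr)

lemma isCatalan_iff {w : List ℕ} :
    IsCatalan w ↔
      w.head? = some 1 ∧ (∀ x ∈ w, 1 ≤ x) ∧ w.IsChain (fun a b => b ≤ a + 1) := by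
  rw [IsCatalan, isChain_iff_getElem]
  cases w with
  | nil => simp
  | cons a t =>
    simp only [ne_eq, reduceCtorEq, not_false_eq_true, getD_cons_zero, true_and, head?_cons,
      Option.some.injEq]
    constructor
    · rintro ⟨rfl, hstep⟩
      refine ⟨rfl, fun x hx => ?_, fun i hi => ?_⟩
      · obtain ⟨_ | i, hi, rfl⟩ := getElem_of_mem hx
        · exact le_rfl
        · simpa (disch := omega) only [getD_eq_getElem] using (hstep i hi).1
      · simpa (disch := omega) only [getD_eq_getElem] using (hstep i hi).2
    · rintro ⟨rfl, hpos, hchain⟩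
      refine ⟨rfl, fun i hi => ?_⟩
      simp (disch := omega) only [getD_eq_getElem]
      exact ⟨hpos _ (getElem_mem _), hchain i hi⟩

lemma runStart_flatten_map_flipRun {L : List (List ℕ)} (hL : IsRunDecomposition L) (i : ℕ) :
    (RunStart (L.map flipRun).flatten i ↔ RunStart L.flatten i) ∧
      (RunStart L.flatten i → (L.map flipRun).flatten.getD i 0 = L.flatten.getD i 0) := by
  induction L generalizing i with
  | nil => simp
  | cons r L ih =>
    obtain ⟨hr, hsorted, hL', hdesc⟩ := hL.of_cons
    have hdesc' :
        ∀ x ∈ (flipRun r).getLast?, ∀ y ∈ (L.map flipRun).flatten.head?, y < x := by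
      rwa [getLast?_flipRun, head?_flatten_map_flipRun]
    have hlen := length_pos_iff.2 hr
    simp only [map_cons, flatten_cons]
    rw [runStart_append (flipRun_eq_nil_iff.not.2 hr) (isChain_le_flipRun hsorted) hdesc',
      runStart_append hr hsorted hdesc, length_flipRun]
    refine ⟨or_congr_right (and_congr_right fun _ => (ih hL' _).1), ?_⟩
    rintro (rfl | ⟨hle, hi⟩)
    · rw [getD_append _ _ _ _ (by rwa [length_flipRun]), getD_append _ _ _ _ hlen,
        ← headD_eq_getD, ← headD_eq_getD, headD_eq_head?_getD, head?_flipRun,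
        headD_eq_head?_getD]
    · rw [getD_append_right _ _ _ _ (by rwa [length_flipRun]), getD_append_right _ _ _ _ hle,
        length_flipRun]
      exact (ih hL' _).2 hi

lemma isFlattened_flipRuns {w : List ℕ} (hw : IsFlattened w) : IsFlattened (flipRuns w) := by
  have key := runStart_flatten_map_flipRun (isRunDecomposition_runs w)
  rw [flatten_runs] at key
  intro i j hi hj hij
  have hi' := (key i).1.1 hi
  have hj' := (key j).1.1 hj
  rw [flipRuns, (key i).2 hi', (key j).2 hj']
  exact hw i j hi' hj' hij

lemma ncard_occ3_flatten {P : ℕ → ℕ → ℕ → Prop}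
    (hP : ∀ x y z, P x y z → x ≤ y ∧ y ≤ z) {L : List (List ℕ)}
    (hL : IsRunDecomposition L) :
    (occ3 P L.flatten).ncard = (L.map fun r => (occ3 P r).ncard).sum := by
  induction L with
  | nil => simp [occ3]
  | cons r L ih =>
    obtain ⟨-, -, hL', hdesc⟩ := hL.of_cons
    rw [flatten_cons, ncard_occ3_append hP hdesc, ih hL', map_cons, sum_cons]

lemma numOcc_122_flipRuns (w : List ℕ) :
    numOcc [1, 2, 2] (flipRuns w) = numOcc [1, 1, 2] w := by
  have hL := isRunDecomposition_runs w
  rw [numOcc, numOcc, setOf_occAt_122, setOf_occAt_112, flipRuns,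
    ncard_occ3_flatten (fun _ _ _ h => by omega) hL.map_flipRun, map_map]
  conv_rhs => rw [← flatten_runs w, ncard_occ3_flatten (fun _ _ _ h => by omega) hL]
  exact congrArg sum (map_congr_left fun r hr => ncard_occ3_122_flipRun (hL.2.1 r hr))

lemma numOcc_112_flipRuns (w : List ℕ) :
    numOcc [1, 1, 2] (flipRuns w) = numOcc [1, 2, 2] w := by
  conv_rhs => rw [← flipRuns_involutive w]
  exact (numOcc_122_flipRuns _).symm

lemma flipRuns_mem_flatCat {n : ℕ} {w : List ℕ} (hw : w ∈ FlatCat n) :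
    flipRuns w ∈ FlatCat n := by
  obtain ⟨hlen, hcat, hflat⟩ := hw
  obtain ⟨hhead, hpos, hchain⟩ := isCatalan_iff.1 hcat
  exact ⟨(length_flipRuns w).trans hlen,
    isCatalan_iff.2 ⟨(head?_flipRuns w).trans hhead, fun _ => one_le_of_mem_flipRuns hpos,
      isChain_succ_flipRuns hchain⟩,
    isFlattened_flipRuns hflat⟩

end FlattenedCatalan

open FlattenedCatalan

theorem equidist_112_122_general (n : ℕ) (k : ℕ) :
    {w ∈ FlatCat n | numOcc [1, 1, 2] w = k}.ncard
      = {w ∈ FlatCat n | numOcc [1, 2, 2] w = k}.ncard := by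
  refine Set.ncard_congr (fun w _ => flipRuns w) ?_
    (fun _ _ _ _ h => flipRuns_involutive.injective h) ?_
  · rintro w ⟨hw, rfl⟩
    exact ⟨flipRuns_mem_flatCat hw, numOcc_122_flipRuns w⟩
  · rintro w ⟨hw, rfl⟩
    exact ⟨flipRuns w, ⟨flipRuns_mem_flatCat hw, numOcc_112_flipRuns w⟩,
      flipRuns_involutive w⟩

/-- The consecutive patterns `112` and `122` are equidistributed on flattened
Catalan words of length `n` for every `n ≥ 1`. -/
theorem equidist_112_122 (n : ℕ) (hn : 1 ≤ n) (k : ℕ) :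
    {w ∈ FlatCat n | numOcc [1, 1, 2] w = k}.ncard
      = {w ∈ FlatCat n | numOcc [1, 2, 2] w = k}.ncard :=
  equidist_112_122_general n k
end
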